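/- arXiv:math/0409053 — 2 statements merged into one kernel-verified Lean document; each statement's English description precedes it below -/
import Mathlib

section
/- Assume the pair C, C^du is good for integrating g. Then the coordinate ring of matrix coefficients F[M] is an integral domain (it has no zero divisors); consequently the Tannaka monoid M is irreducible in its Zariski topology. -/
/-!
If `f_{φv} f_{ψw} = 0` on `M`, then the matrix coefficient of `φ ⊗ ψ` and `v ⊗ w` vanishes on
`M`. Since `g ⊆ Lie(M)`, the vectors `u` with `f_{ξu} = 0` on `M` form a `g`-stable subspace
(apply `δ_x` to the translates `f_{ξ ∘ m, u}`), so `(φ ⊗ ψ)(xⁿ (v ⊗ w)) = 0` for all `x ∈ g`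
and `n`. Expanding `xⁿ (v ⊗ w)` binomially and comparing exponential generating functions,
for each `x` either `φ(xⁿ v) = 0` for all `n` or `ψ(xⁿ w) = 0` for all `n`; both conditions
are polynomial along lines of `g`, so one of them holds for every `x`. Finally, in
characteristic zero the vectors `xⁿ v` span a `g`-submodule (by polarization), which is an
object of `C`; naturality of `m ∈ M` for its inclusion shows `m v` lies in it, so
`f_{φv} = 0`.
-/

open TensorProduct

attribute [local instance 100] LieRing.ofAssociativeRing

universe u v w

/-- The data of a (full sub)category `C` of `g`-modules together with a category of duals:
an index type `ι`, for each index a `g`-module `V i`, and a chosen point-separating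
subspace `du i` of the full linear dual of `V i`. -/
structure TannakaSetting (F : Type u) [Field F] (g : Type v) [LieRing g] [LieAlgebra F g] where
  ι : Type w
  V : ι → Type w
  [iAdd : ∀ i, AddCommGroup (V i)]
  [iMod : ∀ i, Module F (V i)]
  ρ : ∀ i, g →ₗ⁅F⁆ Module.End F (V i)
  du : ∀ i, Submodule F (Module.Dual F (V i))

attribute [instance] TannakaSetting.iAdd TannakaSetting.iMod

namespace TannakaSetting

variable {F : Type u} [Field F] {g : Type v} [LieRing g] [LieAlgebra F g]
variable (D : TannakaSetting F g)

/-- `g`-equivariant linear maps between objects of the category. -/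
def IsHom {i j : D.ι} (f : D.V i →ₗ[F] D.V j) : Prop :=
  ∀ x : g, f ∘ₗ (D.ρ i x : Module.End F (D.V i)) = (D.ρ j x : Module.End F (D.V j)) ∘ₗ f

/-- An endomorphism of `V i` lies in `End_{V^du}(V)`, i.e. its transpose preserves
the chosen dual subspace. -/
def PreservesDu (i : D.ι) (f : Module.End F (D.V i)) : Prop :=
  ∀ φ ∈ D.du i, f.dualMap φ ∈ D.du i

/-- The action of `x ∈ g` on a tensor product of two objects. -/
noncomputable def tensorρ (i j : D.ι) (x : g) : Module.End F (D.V i ⊗[F] D.V j) :=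
  TensorProduct.map (D.ρ i x) LinearMap.id + TensorProduct.map LinearMap.id (D.ρ j x)

/-- `e` realizes `V k` as a tensor product of the `g`-modules `V i` and `V j`. -/
def IsTensorProd (i j k : D.ι) (e : D.V k ≃ₗ[F] (D.V i ⊗[F] D.V j)) : Prop :=
  ∀ x : g, e.toLinearMap ∘ₗ (D.ρ k x : Module.End F (D.V k)) = D.tensorρ i j x ∘ₗ e.toLinearMap

/-- `e` realizes `V k` as a direct sum of the `g`-modules `V i` and `V j`. -/
def IsSumProd (i j k : D.ι) (e : D.V k ≃ₗ[F] (D.V i × D.V j)) : Prop :=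
  ∀ x : g, e.toLinearMap ∘ₗ (D.ρ k x : Module.End F (D.V k)) =
    ((D.ρ i x : Module.End F (D.V i)).prodMap (D.ρ j x : Module.End F (D.V j))) ∘ₗ e.toLinearMap

/-- `V i` is a one-dimensional trivial `g`-module. -/
def IsTrivOneDim (i : D.ι) : Prop :=
  Module.finrank F (D.V i) = 1 ∧ ∀ x : g, (D.ρ i x : Module.End F (D.V i)) = 0

/-- The functional `φ ⊗ ψ` on a tensor product. -/
noncomputable def tensorDual {i j : D.ι} (φ : Module.Dual F (D.V i))
    (ψ : Module.Dual F (D.V j)) : Module.Dual F (D.V i ⊗[F] D.V j) :=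
  TensorProduct.dualDistrib F (D.V i) (D.V j) (φ ⊗ₜ[F] ψ)

/-- The axioms on the pair of categories `C`, `C^du`:
`C` is closed under isomorphism, (binary) direct sums, tensor products, submodules,
contains a one-dimensional trivial module, `g` acts faithfully, and the duals separate points,
are stable under the transposed `g`-action and under transposes of morphisms, and are compatible
with direct sums and tensor products. -/
structure IsGoodSetting : Prop where
  separating : ∀ (i : D.ι) (v : D.V i), v ≠ 0 → ∃ φ ∈ D.du i, φ v ≠ 0
  du_g : ∀ (i : D.ι) (x : g), D.PreservesDu i (D.ρ i x)
  du_hom : ∀ (i j : D.ι) (f : D.V i →ₗ[F] D.V j), D.IsHom f →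
    ∀ ψ ∈ D.du j, f.dualMap ψ ∈ D.du i
  faithful : ∀ x : g, (∀ i, (D.ρ i x : Module.End F (D.V i)) = 0) → x = 0
  exists_triv : ∃ i, D.IsTrivOneDim i
  exists_sum : ∀ i j : D.ι, ∃ (k : D.ι) (e : D.V k ≃ₗ[F] (D.V i × D.V j)), D.IsSumProd i j k e
  exists_tensor : ∀ i j : D.ι,
    ∃ (k : D.ι) (e : D.V k ≃ₗ[F] (D.V i ⊗[F] D.V j)), D.IsTensorProd i j k e
  du_tensor : ∀ (i j k : D.ι) (e : D.V k ≃ₗ[F] (D.V i ⊗[F] D.V j)), D.IsTensorProd i j k e →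
    ∀ φ ∈ D.du i, ∀ ψ ∈ D.du j, e.toLinearMap.dualMap (D.tensorDual φ ψ) ∈ D.du k
  du_sum : ∀ (i j k : D.ι) (e : D.V k ≃ₗ[F] (D.V i × D.V j)), D.IsSumProd i j k e →
    ∀ ξ : Module.Dual F (D.V k), ξ ∈ D.du k ↔
      ∃ φ ∈ D.du i, ∃ ψ ∈ D.du j,
        ξ = e.toLinearMap.dualMap
          ((LinearMap.fst F (D.V i) (D.V j)).dualMap φ +
            (LinearMap.snd F (D.V i) (D.V j)).dualMap ψ)
  submod_closed : ∀ (i : D.ι) (U : Submodule F (D.V i)), (∀ x : g, ∀ u ∈ U, D.ρ i x u ∈ U) →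
    ∃ (k : D.ι) (e : D.V k ≃ₗ[F] ↥U), ∀ (x : g) (v : D.V k),
      (↑(e ((D.ρ k x) v)) : D.V i) = D.ρ i x ↑(e v)
  isoClosed : ∀ (W : Type w) [AddCommGroup W] [Module F W] (ρW : g →ₗ⁅F⁆ Module.End F W)
    (i : D.ι) (e : D.V i ≃ₗ[F] W), (∀ (x : g) (v : D.V i), e (D.ρ i x v) = ρW x (e v)) →
    ∃ (k : D.ι) (e' : D.V k ≃ₗ[F] W), ∀ (x : g) (v : D.V k), e' (D.ρ k x v) = ρW x (e' v)

/-- The algebra `Nat` of natural transformations: families of endomorphisms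
`m i ∈ End_{V^du}(V i)` commuting with all `g`-equivariant maps between objects. -/
def NatAlg : Set (∀ i, Module.End F (D.V i)) :=
  { m | (∀ i, D.PreservesDu i (m i)) ∧
        ∀ (i j : D.ι) (f : D.V i →ₗ[F] D.V j), D.IsHom f → f ∘ₗ m i = m j ∘ₗ f }

/-- The Tannaka monoid `M`: natural transformations compatible with tensor products and
acting as the identity on trivial one-dimensional modules. -/
def M : Set (∀ i, Module.End F (D.V i)) :=
  { m | m ∈ D.NatAlg ∧
        (∀ (i j k : D.ι) (e : D.V k ≃ₗ[F] (D.V i ⊗[F] D.V j)), D.IsTensorProd i j k e →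
          e.toLinearMap ∘ₗ m k = TensorProduct.map (m i) (m j) ∘ₗ e.toLinearMap) ∧
        (∀ i, D.IsTrivOneDim i → m i = 1) }

/-- The matrix coefficient `f_{φ v}` as a function on the Tannaka monoid `M`. -/
def matCoef (i : D.ι) (φ : Module.Dual F (D.V i)) (v : D.V i) : ↥D.M → F :=
  fun m => φ (m.1 i v)

/-- The coordinate ring `F[M]` of matrix coefficients (a set of functions on `M`). -/
def coordRing : Set (↥D.M → F) :=
  { f | ∃ (i : D.ι) (φ : Module.Dual F (D.V i)) (v : D.V i), φ ∈ D.du i ∧ f = D.matCoef i φ v }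

/-- The Lie algebra `Lie(M)` of the Tannaka monoid. -/
def LieM : Set (∀ i, Module.End F (D.V i)) :=
  { x | x ∈ D.NatAlg ∧
        (∀ (i j k : D.ι) (e : D.V k ≃ₗ[F] (D.V i ⊗[F] D.V j)), D.IsTensorProd i j k e →
          e.toLinearMap ∘ₗ x k =
            (TensorProduct.map (x i) LinearMap.id +
              TensorProduct.map LinearMap.id (x j)) ∘ₗ e.toLinearMap) ∧
        (∀ i, D.IsTrivOneDim i → x i = 0) ∧
        (∃ δ : (↥D.M → F) → F, ∀ (i : D.ι) (φ : Module.Dual F (D.V i)) (v : D.V i),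
          φ ∈ D.du i → δ (D.matCoef i φ v) = φ (x i v)) }

/-- The Lie algebra `Lie(N)` of a submonoid `N ⊆ M`: those `x ∈ Lie(M)` whose derivation
`δ_x` annihilates the vanishing ideal `I(N) ⊆ F[M]`. -/
def LieOf (N : Set (↥D.M)) : Set (∀ i, Module.End F (D.V i)) :=
  { x | x ∈ D.LieM ∧ ∀ (i : D.ι) (φ : Module.Dual F (D.V i)) (v : D.V i), φ ∈ D.du i →
      (∀ n ∈ N, D.matCoef i φ v n = 0) → φ (x i v) = 0 }

/-- The unit group `M^×` of the Tannaka monoid, as a subset of `M`. -/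
def unitsSet : Set (↥D.M) :=
  { m | ∃ n : ↥D.M, m.1 * n.1 = 1 ∧ n.1 * m.1 = 1 }

/-- The pair `C`, `C^du` is good for integrating `g`: `g ⊆ Lie(M)`. -/
def Good : Prop := ∀ x : g, (fun i => (D.ρ i x : Module.End F (D.V i))) ∈ D.LieM

/-- The pair `C`, `C^du` is very good for integrating `g`: `g ⊆ Lie(M^×)`. -/
def VeryGood : Prop :=
  ∀ x : g, (fun i => (D.ρ i x : Module.End F (D.V i))) ∈ D.LieOf D.unitsSet

/-- A subset `S ⊆ M` is Zariski dense in `M`. -/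
def DenseIn (S : Set (↥D.M)) : Prop :=
  ∀ f ∈ D.coordRing, (∀ m ∈ S, f m = 0) → ∀ m, f m = 0

theorem one_mem_M : (1 : ∀ i, Module.End F (D.V i)) ∈ D.M := by
  refine ⟨⟨?_, ?_⟩, ?_, ?_⟩
  · intro i φ hφ
    simpa [Module.End.one_eq_id] using hφ
  · intro i j f _
    ext v
    simp
  · intro i j k e _
    ext v
    simp [TensorProduct.map_one]
  · intro i _
    rfl

/-- The unit of the Tannaka monoid as an element of the subtype `↥M`. -/
def oneM : ↥D.M := ⟨1, D.one_mem_M⟩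

end TannakaSetting

open Finset Polynomial

section LinePower

variable {F R : Type*} [Field F] [Ring R] [Algebra F R]

noncomputable def linePow (a b : R) (m : ℕ) : R[X] := (C b * X + C a) ^ m

theorem pow_add_smul_eq_sum (a b : R) (t : F) (m : ℕ) :
    (a + t • b) ^ m = ∑ j ∈ range (m + 1), t ^ j • (linePow a b m).coeff j := by
  let ev : R[X] →+* R :=
    eval₂RingHom' (RingHom.id R) (algebraMap F R t) fun r => (Algebra.commutes t r).symm
  have hdeg : (linePow a b m).natDegree < m + 1 := by
    have : (linePow a b m).natDegree ≤ m * 1 := natDegree_pow_le_of_le m natDegree_linear_le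
    omega
  have hev : ∀ p, ev p = p.eval₂ (RingHom.id R) (algebraMap F R t) := fun _ => rfl
  calc (a + t • b) ^ m = ev (linePow a b m) := by
        rw [linePow, map_pow, map_add, map_mul, hev, hev, hev, eval₂_C, eval₂_C, eval₂_X,
          RingHom.id_apply, RingHom.id_apply, ← Algebra.commutes, ← Algebra.smul_def, add_comm]
    _ = _ := by
        rw [hev, eval₂_eq_sum_range' _ hdeg]
        simp only [RingHom.id_apply, ← map_pow, ← Algebra.commutes, ← Algebra.smul_def]

theorem linePow_coeff_zero (a b : R) (m : ℕ) : (linePow a b m).coeff 0 = a ^ m := by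
  induction m with
  | zero => simp [linePow]
  | succ m ih => simp_all [linePow, pow_succ', mul_coeff_zero]

theorem linePow_coeff_one (a b : R) (m : ℕ) :
    (linePow a b m).coeff 1 = ∑ k ∈ range m, a ^ (m - 1 - k) * b * a ^ k := by
  induction m with
  | zero => simp [linePow, coeff_one]
  | succ m ih =>
    have hrec : (linePow a b (m + 1)).coeff 1
        = b * (linePow a b m).coeff 0 + a * (linePow a b m).coeff 1 := by
      rw [linePow, pow_succ', add_mul, coeff_add, mul_assoc, coeff_C_mul, coeff_C_mul,
        coeff_X_mul, ← linePow]
    rw [hrec, ih, linePow_coeff_zero, sum_range_succ, mul_sum, add_comm]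
    congr 1
    · refine sum_congr rfl fun k hk => ?_
      rw [← mul_assoc, ← mul_assoc, ← pow_succ', show m - 1 - k + 1 = m + 1 - 1 - k by
        have := mem_range.mp hk; omega]
    · simp

end LinePower

section PolynomialFunctions

variable {F V : Type*} [Field F] [Infinite F] [AddCommGroup V] [Module F V]

theorem eq_zero_of_forall_sum_pow_smul_eq_zero {c : ℕ → V} {N : ℕ}
    (h : ∀ t : F, ∑ j ∈ range N, t ^ j • c j = 0) {j : ℕ} (hj : j < N) : c j = 0 := by
  refine (Module.forall_dual_apply_eq_zero_iff F (c j)).mp fun ζ => ?_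
  have hp : ∑ k ∈ range N, monomial k (ζ (c k)) = 0 := Polynomial.funext fun t => by
    simpa [eval_finsetSum, mul_comm] using congrArg ζ (h t)
  simpa [finsetSum_coeff, coeff_monomial, hj] using congrArg (coeff · j) hp

theorem Submodule.mem_of_forall_sum_pow_smul_mem (S : Submodule F V) {c : ℕ → V} {N : ℕ}
    (h : ∀ t : F, ∑ j ∈ range N, t ^ j • c j ∈ S) {j : ℕ} (hj : j < N) : c j ∈ S := by
  rw [← Submodule.Quotient.mk_eq_zero]
  refine eq_zero_of_forall_sum_pow_smul_eq_zero (F := F) (c := fun k => S.mkQ (c k))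
    (fun t => ?_) hj
  have := (Submodule.Quotient.mk_eq_zero S).mpr (h t)
  rwa [← Submodule.mkQ_apply, map_sum] at this

end PolynomialFunctions

section PolynomialOnLines

variable {F E : Type*} [Field F] [AddCommGroup E] [Module F E]

def IsPolynomialOnLines (f : E → F) : Prop :=
  ∀ x y : E, ∃ p : F[X], ∀ t : F, p.eval t = f (x + t • y)

theorem isPolynomialOnLines_apply_pow_apply {V : Type*} [AddCommGroup V] [Module F V]
    (ρ : E →ₗ[F] Module.End F V) (φ : Module.Dual F V) (v : V) (n : ℕ) :
    IsPolynomialOnLines fun x => φ ((ρ x ^ n) v) := by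
  intro x y
  refine ⟨∑ j ∈ range (n + 1), monomial j (φ ((linePow (ρ x) (ρ y) n).coeff j v)), fun t => ?_⟩
  simp [eval_finsetSum, pow_add_smul_eq_sum, map_sum, mul_comm]

theorem forall_eq_zero_or_forall_eq_zero_of_isPolynomialOnLines [Infinite F]
    {P Q : ℕ → E → F} (hP : ∀ n, IsPolynomialOnLines (P n)) (hQ : ∀ n, IsPolynomialOnLines (Q n))
    (h : ∀ x, (∀ n, P n x = 0) ∨ (∀ n, Q n x = 0)) :
    (∀ n x, P n x = 0) ∨ (∀ n x, Q n x = 0) := by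
  by_contra! hc
  obtain ⟨⟨n, x, hx⟩, ⟨m, y, hy⟩⟩ := hc
  obtain ⟨p, hp⟩ := hP n x (y - x)
  obtain ⟨q, hq⟩ := hQ m x (y - x)
  have hpq : p * q = 0 := Polynomial.funext fun t => by
    rcases h (x + t • (y - x)) with h0 | h0 <;> simp [hp, hq, h0]
  rcases mul_eq_zero.mp hpq with h0 | h0
  · exact hx (by simpa [h0] using (hp 0).symm)
  · exact hy (by simpa [h0] using (hq 1).symm)

end PolynomialOnLines

/-- The exponential generating functions of `α` and `β` multiply to that of their binomial
convolution, and `F⟦X⟧` is a domain. -/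
theorem eq_zero_or_eq_zero_of_sum_choose_mul_eq_zero {F : Type*} [Field F] [CharZero F]
    {α β : ℕ → F} (h : ∀ n, ∑ k ∈ range (n + 1), (n.choose k : F) * (α k * β (n - k)) = 0) :
    α = 0 ∨ β = 0 := by
  let egf : (ℕ → F) → PowerSeries F := fun γ => PowerSeries.mk fun n => γ n / n.factorial
  have hegf : ∀ γ, egf γ = 0 → γ = 0 := fun γ hγ => funext fun n => by
    simpa [egf, Nat.factorial_ne_zero] using congrArg (PowerSeries.coeff n) hγ
  have hmul : egf α * egf β = 0 := by
    ext n
    rw [PowerSeries.coeff_mul, Finset.Nat.sum_antidiagonal_eq_sum_range_succ_mk, map_zero,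
      ← mul_eq_zero_of_right (n.factorial : F)⁻¹ (h n), mul_sum]
    refine sum_congr rfl fun k hk => ?_
    have hk : k ≤ n := Nat.lt_succ_iff.mp (mem_range.mp hk)
    simp only [egf, PowerSeries.coeff_mk, Nat.cast_choose F hk]
    field_simp
    rw [mul_div_mul_right _ _ (Nat.cast_ne_zero.mpr n.factorial_ne_zero)]
  exact (mul_eq_zero.mp hmul).imp (hegf α) (hegf β)

theorem pow_mul_eq_mul_pow_add_sum_ad {F A : Type*} [CommRing F] [Ring A] [Algebra F A]
    (a b : A) (p : ℕ) :
    a ^ p * b = b * a ^ p +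
      ∑ m ∈ range p, p.choose m • ((LieAlgebra.ad F A a ^ (p - m)) b * a ^ m) := by
  have had : LieAlgebra.ad F A a = LinearMap.mulLeft F a - LinearMap.mulRight F a :=
    congrFun (LieAlgebra.ad_eq_lmul_left_sub_lmul_right (R := F) A) a
  have hcomm : Commute (LinearMap.mulRight F a) (LieAlgebra.ad F A a) := by
    rw [had]
    exact (LinearMap.commute_mulLeft_right a a).symm.sub_right (Commute.refl _)
  have hsplit : LinearMap.mulLeft F a = LinearMap.mulRight F a + LieAlgebra.ad F A a := by
    rw [had]; abel
  calc a ^ p * b = (LinearMap.mulLeft F a ^ p) b := by rw [LinearMap.pow_mulLeft]; rfl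
    _ = ∑ m ∈ range (p + 1), p.choose m • ((LieAlgebra.ad F A a ^ (p - m)) b * a ^ m) := by
      rw [hsplit, hcomm.add_pow, LinearMap.sum_apply]
      refine sum_congr rfl fun m _ => ?_
      simp only [Module.End.mul_apply, Module.End.natCast_apply, map_nsmul, LinearMap.pow_mulRight,
        LinearMap.mulRight_apply]
    _ = _ := by rw [sum_range_succ, add_comm]; simp

theorem LieHom.ad_pow_map {R L L' : Type*} [CommRing R] [LieRing L] [LieAlgebra R L]
    [LieRing L'] [LieAlgebra R L'] (f : L →ₗ⁅R⁆ L') (x y : L) (k : ℕ) :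
    (LieAlgebra.ad R L' (f x) ^ k) (f y) = f ((LieAlgebra.ad R L x ^ k) y) := by
  have h : (LieAlgebra.ad R L' (f x)).comp (f : L →ₗ[R] L') =
      (f : L →ₗ[R] L').comp (LieAlgebra.ad R L x) := by
    ext z; simp
  exact LinearMap.congr_fun (Module.End.commute_pow_left_of_commute h k) y

theorem TensorProduct.map_add_map_pow_tmul {R V W : Type*} [CommRing R] [AddCommGroup V]
    [Module R V] [AddCommGroup W] [Module R W] (A : Module.End R V) (B : Module.End R W)
    (n : ℕ) (v : V) (w : W) :
    ((TensorProduct.map A LinearMap.id + TensorProduct.map LinearMap.id B :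
      Module.End R (V ⊗[R] W)) ^ n) (v ⊗ₜ w) =
      ∑ c ∈ range (n + 1), n.choose c • ((A ^ c) v ⊗ₜ (B ^ (n - c)) w) := by
  have hcomm : Commute (TensorProduct.map A LinearMap.id) (TensorProduct.map LinearMap.id B) := by
    simp only [Commute, SemiconjBy, ← TensorProduct.map_mul]
    rfl
  rw [hcomm.add_pow, LinearMap.sum_apply]
  refine sum_congr rfl fun c _ => ?_
  simp [Module.End.mul_apply, Module.End.natCast_apply, TensorProduct.map_pow]

section PowerSpan

variable {F g V : Type*} [Field F] [LieRing g] [LieAlgebra F g] [AddCommGroup V] [Module F V]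

def powerSpan (ρ : g →ₗ⁅F⁆ Module.End F V) (v : V) : Submodule F V :=
  Submodule.span F (Set.range fun p : g × ℕ => (ρ p.1 ^ p.2) v)

theorem pow_apply_mem_powerSpan (ρ : g →ₗ⁅F⁆ Module.End F V) (v : V) (x : g) (n : ℕ) :
    (ρ x ^ n) v ∈ powerSpan ρ v :=
  Submodule.subset_span ⟨(x, n), rfl⟩

variable [CharZero F]

/-- Polarizing `(x + t y) ^ (n + 1) v` puts `∑ₖ xⁿ⁻ᵏ y xᵏ v` in the span; moving `y` to the
front turns this into `(n + 1) y xⁿ v` plus terms `(ad x)ʲ(y) xᵐ v` with `m < n`. -/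
theorem apply_pow_apply_mem_powerSpan (ρ : g →ₗ⁅F⁆ Module.End F V) (v : V) (x y : g) (n : ℕ) :
    ρ y ((ρ x ^ n) v) ∈ powerSpan ρ v := by
  induction n using Nat.strong_induction_on generalizing y with
  | _ n ih =>
  set S := powerSpan ρ v
  have hterm : ∀ k ∈ range (n + 1), (ρ x ^ (n - k) * ρ y * ρ x ^ k) v - ρ y ((ρ x ^ n) v) ∈ S := by
    intro k hk
    have hk : k ≤ n := Nat.lt_succ_iff.mp (mem_range.mp hk)
    rw [pow_mul_eq_mul_pow_add_sum_ad (F := F), add_mul, LinearMap.add_apply,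
      Module.End.mul_apply, Module.End.mul_apply, ← Module.End.mul_apply (ρ x ^ (n - k)),
      ← pow_add, Nat.sub_add_cancel hk, add_sub_cancel_left, sum_mul, LinearMap.sum_apply]
    refine Submodule.sum_mem _ fun m hm => ?_
    rw [smul_mul_assoc, mul_assoc, ← pow_add, LinearMap.smul_apply, Module.End.mul_apply,
      LieHom.ad_pow_map]
    exact Submodule.smul_of_tower_mem _ _ (ih _ (by have := mem_range.mp hm; omega) _)
  have hcoeff : (linePow (ρ x) (ρ y) (n + 1)).coeff 1 v ∈ S := by
    refine Submodule.mem_of_forall_sum_pow_smul_mem S (N := n + 2)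
      (c := fun j => (linePow (ρ x) (ρ y) (n + 1)).coeff j v) (fun t => ?_) (by omega)
    have h := pow_apply_mem_powerSpan ρ v (x + t • y) (n + 1)
    rw [map_add, map_smul, pow_add_smul_eq_sum, LinearMap.sum_apply] at h
    simpa using h
  rw [linePow_coeff_one, Nat.add_sub_cancel] at hcoeff
  have hsum := Submodule.sub_mem S hcoeff (Submodule.sum_mem S hterm)
  rw [sum_sub_distrib, ← LinearMap.sum_apply, sub_sub_cancel, sum_const, card_range,
    ← Nat.cast_smul_eq_nsmul F] at hsum
  exact (Submodule.smul_mem_iff S (Nat.cast_ne_zero.mpr n.succ_ne_zero)).mp hsum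

theorem apply_mem_powerSpan (ρ : g →ₗ⁅F⁆ Module.End F V) (v : V) (y : g) {u : V}
    (hu : u ∈ powerSpan ρ v) : ρ y u ∈ powerSpan ρ v := by
  induction hu using Submodule.span_induction with
  | mem u hu => obtain ⟨⟨x, n⟩, rfl⟩ := hu; exact apply_pow_apply_mem_powerSpan ρ v x y n
  | zero => simp
  | add a b _ _ ha hb => rw [map_add]; exact Submodule.add_mem _ ha hb
  | smul c a _ ha => rw [map_smul]; exact Submodule.smul_mem _ c ha

end PowerSpan

namespace TannakaSetting

variable {F : Type u} [Field F] {g : Type v} [LieRing g] [LieAlgebra F g] (D : TannakaSetting F g)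

theorem mul_mem_M {m n : ∀ i, Module.End F (D.V i)} (hm : m ∈ D.M) (hn : n ∈ D.M) :
    m * n ∈ D.M := by
  obtain ⟨⟨hm_du, hm_nat⟩, hm_tensor, hm_triv⟩ := hm
  obtain ⟨⟨hn_du, hn_nat⟩, hn_tensor, hn_triv⟩ := hn
  refine ⟨⟨fun i φ hφ => hn_du i _ (hm_du i φ hφ), fun i j f hf => ?_⟩, fun i j k e he => ?_,
    fun i hi => by simp [hm_triv i hi, hn_triv i hi]⟩
  · rw [Pi.mul_apply, Pi.mul_apply, Module.End.mul_eq_comp, Module.End.mul_eq_comp,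
      ← LinearMap.comp_assoc, hm_nat i j f hf, LinearMap.comp_assoc, hn_nat i j f hf,
      LinearMap.comp_assoc]
  · rw [Pi.mul_apply, Pi.mul_apply, Module.End.mul_eq_comp, ← LinearMap.comp_assoc,
      hm_tensor i j k e he, LinearMap.comp_assoc, hn_tensor i j k e he, ← LinearMap.comp_assoc,
      ← Module.End.mul_eq_comp, ← TensorProduct.map_mul]
    rfl

variable {D}

/-- For `m ∈ M` the coefficient `f_{φ ∘ m, v}` also vanishes on `M`, as `M` is closed under
products; so `δ_x` kills it, i.e. `φ (m (x v)) = 0`. -/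
theorem matCoef_ρ_apply_eq_zero (hGood : D.Good) {i : D.ι} {φ : Module.Dual F (D.V i)}
    (hφ : φ ∈ D.du i) {v : D.V i} (h : D.matCoef i φ v = 0) (x : g) :
    D.matCoef i φ (D.ρ i x v) = 0 := by
  funext ⟨m, hm⟩
  obtain ⟨-, -, -, δ, hδ⟩ := hGood x
  have hvanish : D.matCoef i ((m i).dualMap φ) v = D.matCoef i 0 v := funext fun n =>
    congrFun h ⟨m * n.1, D.mul_mem_M hm n.2⟩
  simpa [matCoef, hvanish, hδ i 0 v (Submodule.zero_mem _)] using
    (hδ i _ v (hm.1.1 i φ hφ)).symm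

theorem matCoef_pow_apply_eq_zero (hGood : D.Good) {i : D.ι} {φ : Module.Dual F (D.V i)}
    (hφ : φ ∈ D.du i) {v : D.V i} (h : D.matCoef i φ v = 0) (x : g) (n : ℕ) :
    D.matCoef i φ ((D.ρ i x ^ n) v) = 0 := by
  induction n with
  | zero => simpa using h
  | succ n ih => rw [pow_succ', Module.End.mul_apply]; exact matCoef_ρ_apply_eq_zero hGood hφ ih x

theorem apply_mem_of_invariant (HG : D.IsGoodSetting) {m : ∀ i, Module.End F (D.V i)}
    (hm : m ∈ D.NatAlg) {i : D.ι} {U : Submodule F (D.V i)} (hU : ∀ x : g, ∀ u ∈ U, D.ρ i x u ∈ U)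
    {v : D.V i} (hv : v ∈ U) : m i v ∈ U := by
  obtain ⟨k, e, he⟩ := HG.submod_closed i U hU
  let incl : D.V k →ₗ[F] D.V i := U.subtype ∘ₗ e.toLinearMap
  have hincl : D.IsHom incl := fun x => LinearMap.ext fun u => he x u
  have hv' : incl (e.symm ⟨v, hv⟩) = v := by simp [incl]
  rw [← hv', ← LinearMap.comp_apply, ← hm.2 k i incl hincl]
  exact (e _).2

theorem matCoef_eq_zero_of_forall_pow [CharZero F] (HG : D.IsGoodSetting) {i : D.ι}
    {φ : Module.Dual F (D.V i)} {v : D.V i} (h : ∀ (x : g) (n : ℕ), φ ((D.ρ i x ^ n) v) = 0) :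
    D.matCoef i φ v = 0 := by
  funext m
  have hker : powerSpan (D.ρ i) v ≤ LinearMap.ker φ :=
    Submodule.span_le.mpr fun _ ⟨⟨x, n⟩, hxn⟩ => hxn ▸ h x n
  refine hker (apply_mem_of_invariant HG m.2.1 (fun x _ hu => apply_mem_powerSpan _ v x hu) ?_)
  simpa using pow_apply_mem_powerSpan (D.ρ i) v 0 0

section Tensor

variable {i j k : D.ι} {e : D.V k ≃ₗ[F] (D.V i ⊗[F] D.V j)}
  (φ : Module.Dual F (D.V i)) (ψ : Module.Dual F (D.V j)) (v : D.V i) (w : D.V j)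

theorem matCoef_tensor (he : D.IsTensorProd i j k e) :
    D.matCoef k (e.toLinearMap.dualMap (D.tensorDual φ ψ)) (e.symm (v ⊗ₜ w)) =
      D.matCoef i φ v * D.matCoef j ψ w := by
  funext m
  have hm := LinearMap.congr_fun (m.2.2.1 i j k e he) (e.symm (v ⊗ₜ w))
  simp only [LinearMap.comp_apply, LinearEquiv.coe_coe, LinearEquiv.apply_symm_apply] at hm
  simp [matCoef, tensorDual, hm]

theorem tensorDual_apply_pow (he : D.IsTensorProd i j k e) (x : g) (n : ℕ) :
    e.toLinearMap.dualMap (D.tensorDual φ ψ) ((D.ρ k x ^ n) (e.symm (v ⊗ₜ w))) =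
      ∑ c ∈ range (n + 1),
        (n.choose c : F) * (φ ((D.ρ i x ^ c) v) * ψ ((D.ρ j x ^ (n - c)) w)) := by
  have hpow := LinearMap.congr_fun
    (Module.End.commute_pow_left_of_commute (he x).symm n) (e.symm (v ⊗ₜ w))
  simp only [LinearMap.comp_apply, LinearEquiv.coe_coe, LinearEquiv.apply_symm_apply] at hpow
  simp [tensorDual, ← hpow, tensorρ, TensorProduct.map_add_map_pow_tmul, map_sum]

end Tensor

theorem eq_zero_or_eq_zero_of_mul_eq_zero [CharZero F] (HG : D.IsGoodSetting) (hGood : D.Good)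
    {f h : ↥D.M → F} (hf : f ∈ D.coordRing) (hh : h ∈ D.coordRing) (hfh : f * h = 0) :
    f = 0 ∨ h = 0 := by
  obtain ⟨i, φ, v, hφ, rfl⟩ := hf
  obtain ⟨j, ψ, w, hψ, rfl⟩ := hh
  obtain ⟨k, e, he⟩ := HG.exists_tensor i j
  have hξ := HG.du_tensor i j k e he φ hφ ψ hψ
  have hconv : ∀ (x : g) (n : ℕ), ∑ c ∈ range (n + 1),
      (n.choose c : F) * (φ ((D.ρ i x ^ c) v) * ψ ((D.ρ j x ^ (n - c)) w)) = 0 := fun x n => by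
    rw [← tensorDual_apply_pow φ ψ v w he]
    exact congrFun (matCoef_pow_apply_eq_zero hGood hξ ((matCoef_tensor φ ψ v w he).trans hfh) x n)
      D.oneM
  have hline : ∀ x : g, (∀ n, φ ((D.ρ i x ^ n) v) = 0) ∨ (∀ n, ψ ((D.ρ j x ^ n) w) = 0) :=
    fun x => by simpa [funext_iff] using eq_zero_or_eq_zero_of_sum_choose_mul_eq_zero (hconv x)
  refine (forall_eq_zero_or_forall_eq_zero_of_isPolynomialOnLines
    (fun n => isPolynomialOnLines_apply_pow_apply (D.ρ i : g →ₗ[F] Module.End F (D.V i)) φ v n)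
    (fun n => isPolynomialOnLines_apply_pow_apply (D.ρ j : g →ₗ[F] Module.End F (D.V j)) ψ w n)
    hline).imp ?_ ?_ <;>
  exact fun h0 => matCoef_eq_zero_of_forall_pow HG fun x n => h0 n x

end TannakaSetting

open TensorProduct

variable {F : Type u} [Field F] [CharZero F] {g : Type v} [LieRing g] [LieAlgebra F g]

/-- **`F[M]` is an integral domain; `M` is irreducible.**
Assume the pair `C`, `C^du` is good for integrating `g`.  Then the coordinate ring of matrix
coefficients `F[M]` has no zero divisors (and is nontrivial); consequently the Tannaka monoid
`M` is irreducible in its Zariski topology: it is nonempty, and it is not the union of the zero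
sets of two functions of `F[M]` unless one of them vanishes identically. -/
theorem stmt_8 (D : TannakaSetting F g) (HG : D.IsGoodSetting) (hGood : D.Good) :
    -- `F[M]` is an integral domain:
    ((1 : ↥D.M → F) ≠ 0 ∧
      (∀ f ∈ D.coordRing, ∀ h ∈ D.coordRing, f * h = 0 → f = 0 ∨ h = 0)) ∧
    -- consequently `M` is irreducible:
    (D.M.Nonempty ∧
      (∀ f ∈ D.coordRing, ∀ h ∈ D.coordRing,
        (∀ m : ↥D.M, f m = 0 ∨ h m = 0) →
        (∀ m : ↥D.M, f m = 0) ∨ (∀ m : ↥D.M, h m = 0))) := by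
  have hdomain : ∀ f ∈ D.coordRing, ∀ h ∈ D.coordRing, f * h = 0 → f = 0 ∨ h = 0 :=
    fun _ hf _ hh => TannakaSetting.eq_zero_or_eq_zero_of_mul_eq_zero HG hGood hf hh
  refine ⟨⟨fun h1 => one_ne_zero (congrFun h1 D.oneM), hdomain⟩, ⟨1, D.one_mem_M⟩,
    fun f hf h hh hcover => ?_⟩
  have hfh : f * h = 0 := funext fun m => mul_eq_zero.mpr (hcover m)
  exact (hdomain f hf h hh hfh).imp congrFun congrFun
end

section
/- Let x ∈ g, x ≠ 0, be such that for every g-module V contained in C the endomorphism x_V is locally nilpotent and exp(t·x_V) ∈ End_{V^du}(V) for all t ∈ F. Then: (a) for every t ∈ F there exists an element exp(tx) ∈ M which acts on every object V of C by exp(t·x_V); (b) equipping F with the coordinate ring of polynomial functions, the map u_x: (F,+) → M, t ↦ exp(tx), is a morphism of monoids and a closed embedding of sets with coordinate rings; (c) denoting by U_x the image of u_x, one has Lie(U_x) = F·x. In particular, x is an integrable locally finite element of g. -/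
/-!
Since `x` acts locally nilpotently, the exponential series `exp (t x_V) v` is a finite sum, so
every matrix coefficient is a polynomial in `t` along `t ↦ exp (t x)`. The binomial formula for
commuting operators gives `exp ((t + t') x) = exp (t x) exp (t' x)` and, applied to `x ⊗ 1` and
`1 ⊗ x`, compatibility with tensor products; hence `exp (t x) ∈ M`.

As `x ≠ 0` there is `v₀` with `x v₀ ≠ 0 = x (x v₀)`, and `ξ₀ ∈ V^du` with `ξ₀ (x v₀) = 1`; the
matrix coefficient `h = f_{ξ₀ v₀} - ξ₀ v₀` restricts to the coordinate `t` on `U_x`. Using direct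
sums and tensor products, matrix coefficients are closed under sums and products, with the
Leibniz rule for derivatives along a primitive `y`. Hence every polynomial in `h` is a matrix
coefficient (the embedding), and `f_{ξ v} - q ∘ h`, where `q` is the polynomial
`t ↦ ξ (exp (t x) v)`, is a matrix coefficient vanishing on `U_x`. Evaluating it at a point of
the closure of `U_x` gives closedness; applying `δ_y` for `y ∈ Lie(U_x)` gives
`ξ (y v) = ξ₀ (y v₀) ξ (x v)`.

For integrability, the exponentials on the finite-dimensional `x`-stable subspaces form a
dense submonoid of `M(F·x)`.
-/

open TensorProduct

attribute [instance] LieRing.ofAssociativeRing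

universe u v w

open TensorProduct

set_option maxHeartbeats 1000000
set_option synthInstance.maxHeartbeats 400000

namespace TannakaSetting

variable {F : Type u} [Field F] {g : Type v} [LieRing g] [LieAlgebra F g]
variable (D : TannakaSetting F g)

/-- The index type of the category `C(F·e)`: finite-dimensional `e`-invariant subspaces of
objects of `C` (a skeleton of the category of `F·e`-modules isomorphic to such subspaces). -/
def SubIdx (e : g) : Type _ :=
  Σ i : D.ι, {U : Submodule F (D.V i) // FiniteDimensional F ↥U ∧ ∀ u ∈ U, D.ρ i e u ∈ U}

/-- The underlying module of an object of `C(F·e)`. -/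
abbrev subMod (e : g) (s : D.SubIdx e) : Type _ := ↥(s.2.1)

/-- The action of `e` on an object of `C(F·e)`. -/
noncomputable def subAct (e : g) (s : D.SubIdx e) : Module.End F (D.subMod e s) :=
  (D.ρ s.1 e : Module.End F (D.V s.1)).restrict (fun u hu => s.2.2.2 u hu)

/-- The Tannaka monoid `M(F·e)` of the category `C(F·e)` with its category of full duals:
families of endomorphisms natural with respect to all morphisms of `C(F·e)`, compatible with
tensor products, and acting as the identity on trivial one-dimensional modules. -/
def MFe (e : g) : Set (∀ s : D.SubIdx e, Module.End F (D.subMod e s)) :=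
  { m | (∀ (s s' : D.SubIdx e) (f : D.subMod e s →ₗ[F] D.subMod e s'),
          f ∘ₗ D.subAct e s = D.subAct e s' ∘ₗ f → f ∘ₗ m s = m s' ∘ₗ f) ∧
        (∀ (s s' s'' : D.SubIdx e)
            (E : D.subMod e s'' ≃ₗ[F] (TensorProduct F (D.subMod e s) (D.subMod e s'))),
          (E.toLinearMap ∘ₗ D.subAct e s'' =
            (TensorProduct.map (D.subAct e s) LinearMap.id +
              TensorProduct.map LinearMap.id (D.subAct e s')) ∘ₗ E.toLinearMap) →
          E.toLinearMap ∘ₗ m s'' = TensorProduct.map (m s) (m s') ∘ₗ E.toLinearMap) ∧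
        (∀ s : D.SubIdx e, Module.finrank F (D.subMod e s) = 1 → D.subAct e s = 0 →
          m s = 1) }

/-- A subset of `M(F·e)` is Zariski dense in `M(F·e)` (all duals being full duals). -/
def DenseMFe (e : g) (S : Set (∀ s : D.SubIdx e, Module.End F (D.subMod e s))) : Prop :=
  ∀ (s : D.SubIdx e) (ψ : Module.Dual F (D.subMod e s)) (u : D.subMod e s),
    (∀ d ∈ S, ψ (d s u) = 0) → ∀ m ∈ D.MFe e, ψ (m s u) = 0

/-- `f` is the endomorphism of the object `V i` of `C` induced by the element `d` of `M(F·e)`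
(through the action of `M(F·e)` on the locally finite `F·e`-module `V i`). -/
def IsInduced (e : g) (d : ∀ s : D.SubIdx e, Module.End F (D.subMod e s))
    (i : D.ι) (f : Module.End F (D.V i)) : Prop :=
  ∀ (U : Submodule F (D.V i)) (h1 : FiniteDimensional F ↥U)
    (h2 : ∀ u ∈ U, D.ρ i e u ∈ U) (u : ↥U),
    f ↑u = ((d ⟨i, ⟨U, h1, h2⟩⟩ u : ↥U) : D.V i)

/-- `e` is an integrable locally finite element of `g` with respect to `C`, `C^du`:
`e` acts locally finitely on every object of `C`, and there is a Zariski dense submonoid `S` of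
`M(F·e)` all whose elements induce endomorphisms of the objects of `C` lying in
`End_{V^du}(V)`. -/
def IsIntLocFin (e : g) : Prop :=
  (∀ (i : D.ι) (v : D.V i), ∃ U : Submodule F (D.V i),
    v ∈ U ∧ FiniteDimensional F ↥U ∧ ∀ u ∈ U, D.ρ i e u ∈ U) ∧
  ∃ S : Set (∀ s : D.SubIdx e, Module.End F (D.subMod e s)),
    S ⊆ D.MFe e ∧ 1 ∈ S ∧ (∀ a ∈ S, ∀ b ∈ S, a * b ∈ S) ∧ D.DenseMFe e S ∧
    ∀ d ∈ S, ∀ i : D.ι, ∃ f : Module.End F (D.V i), D.IsInduced e d i f ∧ D.PreservesDu i f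

/-- A parametrization corresponding to an integrable locally finite element `e` of `g`:
the data of a Zariski dense submonoid `S = D_e` of `M(F·e)` all whose elements induce
endomorphisms of the objects of `C` lying in `End_{V^du}(V)`, giving the injective morphism of
monoids `i_e : D_e → M`, `d ↦ (d_V)_V`. -/
structure Param (e : g) where
  S : Set (∀ s : D.SubIdx e, Module.End F (D.subMod e s))
  sub : S ⊆ D.MFe e
  one_mem : 1 ∈ S
  mul_mem : ∀ a ∈ S, ∀ b ∈ S, a * b ∈ S
  dense : D.DenseMFe e S
  lift : ∀ d ∈ S, ∀ i : D.ι,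
    ∃ f : Module.End F (D.V i), D.IsInduced e d i f ∧ D.PreservesDu i f

/-- The image `V_e = i_e(D_e) ⊆ M` of a parametrization. -/
def ParamImage (e : g) (P : D.Param e) : Set (∀ i, Module.End F (D.V i)) :=
  { p | p ∈ D.M ∧ ∃ d ∈ P.S, ∀ i, D.IsInduced e d i (p i) }

end TannakaSetting

namespace TannakaSetting

variable {F : Type u} [Field F] {g : Type v} [LieRing g] [LieAlgebra F g]
variable (D : TannakaSetting F g)

/-- `m ∈ M` is the element `exp(t x)`, i.e. it acts on every object `V` of `C` by the
(pointwise convergent) exponential series `exp(t x_V)`. -/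
def IsExpOf (x : g) (t : F) (m : ∀ i, Module.End F (D.V i)) : Prop :=
  m ∈ D.M ∧ ∀ (i : D.ι) (v : D.V i), ∃ N : ℕ, ∀ n ≥ N,
    m i v = ∑ k ∈ Finset.range n,
      (t ^ k * ((Nat.factorial k : F)⁻¹)) • (((D.ρ i x : Module.End F (D.V i)) ^ k) v)

end TannakaSetting

section LocallyNilpotentExp

open Finset Polynomial
open scoped Nat

variable {F : Type*} [Field F] {W W' : Type*} [AddCommGroup W] [Module F W]
  [AddCommGroup W'] [Module F W']

def IsLocallyNilpotent (a : Module.End F W) : Prop := ∀ w : W, ∃ n : ℕ, (a ^ n) w = 0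

theorem pow_apply_of_comp_eq_comp {f : W →ₗ[F] W'} {a : Module.End F W}
    {a' : Module.End F W'} (h : f ∘ₗ a = a' ∘ₗ f) (n : ℕ) (w : W) :
    f ((a ^ n) w) = (a' ^ n) (f w) := by
  rw [← LinearMap.comp_apply, ← Module.End.commute_pow_left_of_commute h.symm,
    LinearMap.comp_apply]

theorem IsLocallyNilpotent.smul {a : Module.End F W} (ha : IsLocallyNilpotent a) (t : F) :
    IsLocallyNilpotent (t • a) := fun w => by
  obtain ⟨n, hn⟩ := ha w
  exact ⟨n, by rw [_root_.smul_pow, LinearMap.smul_apply, hn, smul_zero]⟩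

theorem IsLocallyNilpotent.of_injective_comp {a : Module.End F W} {a' : Module.End F W'}
    (ha' : IsLocallyNilpotent a') {f : W →ₗ[F] W'} (hf : Function.Injective f)
    (h : f ∘ₗ a = a' ∘ₗ f) : IsLocallyNilpotent a := fun w => by
  obtain ⟨n, hn⟩ := ha' (f w)
  exact ⟨n, hf (by rw [pow_apply_of_comp_eq_comp h, hn, map_zero])⟩

theorem IsLocallyNilpotent.exists_apply_ne_zero_apply_apply_eq_zero {a : Module.End F W}
    (ha : IsLocallyNilpotent a) (h : a ≠ 0) : ∃ v : W, a v ≠ 0 ∧ a (a v) = 0 := by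
  obtain ⟨w, hw⟩ : ∃ w, a w ≠ 0 := by
    by_contra! h'
    exact h (LinearMap.ext h')
  by_contra! hne
  have hpow : ∀ k : ℕ, a ((a ^ k) w) ≠ 0 := by
    intro k
    induction k with
    | zero => simpa using hw
    | succ k ih => rw [pow_succ', Module.End.mul_apply]; exact hne _ ih
  obtain ⟨K, hK⟩ := ha w
  exact hpow K (by rw [hK, map_zero])

def expSum (a : Module.End F W) (n : ℕ) : Module.End F W :=
  ∑ k ∈ range n, (k ! : F)⁻¹ • a ^ k

theorem expSum_apply (a : Module.End F W) (n : ℕ) (w : W) :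
    expSum a n w = ∑ k ∈ range n, (k ! : F)⁻¹ • (a ^ k) w := by
  simp [expSum]

theorem expSum_smul_apply (a : Module.End F W) (t : F) (n : ℕ) (w : W) :
    expSum (t • a) n w = ∑ k ∈ range n, (t ^ k * (k ! : F)⁻¹) • (a ^ k) w := by
  simp only [expSum_apply, _root_.smul_pow, LinearMap.smul_apply, smul_smul, mul_comm]

theorem expSum_apply_of_le {a : Module.End F W} {w : W} {m n : ℕ} (hm : (a ^ m) w = 0)
    (hmn : m ≤ n) : expSum a n w = expSum a m w := by
  rw [expSum_apply, expSum_apply]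
  refine (sum_subset (range_subset_range.2 hmn) fun k _ hk => ?_).symm
  rw [Module.End.pow_map_zero_of_le (by simpa using hk) hm, smul_zero]

theorem expSum_apply_eq_of_pow_apply_eq_zero {a : Module.End F W} {w : W} {m n : ℕ}
    (hm : (a ^ m) w = 0) (hn : (a ^ n) w = 0) : expSum a m w = expSum a n w := by
  rw [← expSum_apply_of_le hm (le_max_left m n), expSum_apply_of_le hn (le_max_right m n)]

theorem apply_expSum_of_comp_eq_comp {f : W →ₗ[F] W'} {a : Module.End F W}
    {a' : Module.End F W'} (h : f ∘ₗ a = a' ∘ₗ f) (n : ℕ) (w : W) :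
    f (expSum a n w) = expSum a' n (f w) := by
  simp only [expSum_apply, map_sum, map_smul, pow_apply_of_comp_eq_comp h]

theorem sum_range_sum_range_sub_eq {M : Type*} [AddCommMonoid M] {f : ℕ → ℕ → M} {P Q N : ℕ}
    (hf : ∀ p q, P ≤ p ∨ Q ≤ q → f p q = 0) (hN : P + Q ≤ N) :
    ∑ n ∈ range N, ∑ p ∈ range (n + 1), f p (n - p) = ∑ p ∈ range P, ∑ q ∈ range Q, f p q := by
  rw [sum_range_diag_flip]
  refine (sum_subset (range_subset_range.2 (by omega)) fun p _ hp => ?_).symm.trans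
    (sum_congr rfl fun p hp => ?_)
  · exact sum_eq_zero fun q _ => hf p q (.inl (by simpa using hp))
  · refine (sum_subset (range_subset_range.2 ?_) fun q _ hq => hf p q (.inr ?_)).symm
    · simp only [mem_range] at hp; omega
    · simpa using hq

theorem expSum_add_apply_of_commute [CharZero F] {a b : Module.End F W} (hab : Commute a b)
    {w : W} {P Q N : ℕ} (hP : (a ^ P) w = 0) (hQ : (b ^ Q) w = 0) (hN : P + Q ≤ N) :
    expSum (a + b) N w = expSum a P (expSum b Q w) := by
  have hvanish : ∀ p q, P ≤ p ∨ Q ≤ q →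
      ((p ! : F)⁻¹ * (q ! : F)⁻¹) • (a ^ p) ((b ^ q) w) = 0 := by
    rintro p q (hp | hq)
    · rw [← Module.End.mul_apply, (hab.pow_pow p q).eq, Module.End.mul_apply,
        Module.End.pow_map_zero_of_le hp hP, map_zero, smul_zero]
    · rw [Module.End.pow_map_zero_of_le hq hQ, map_zero, smul_zero]
  have hbinom : ∀ n, (n ! : F)⁻¹ • ((a + b) ^ n) w = ∑ p ∈ range (n + 1),
      ((p ! : F)⁻¹ * ((n - p) ! : F)⁻¹) • (a ^ p) ((b ^ (n - p)) w) := by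
    intro n
    rw [hab.add_pow, LinearMap.sum_apply, smul_sum]
    refine sum_congr rfl fun p hp => ?_
    have hpn : p ≤ n := Nat.lt_succ_iff.1 (mem_range.1 hp)
    rw [Module.End.mul_apply, Module.End.mul_apply, Module.End.natCast_apply, map_nsmul,
      map_nsmul, ← Nat.cast_smul_eq_nsmul F, smul_smul, Nat.cast_choose F hpn, ← mul_div_assoc,
      inv_mul_cancel₀ (Nat.cast_ne_zero.2 n.factorial_ne_zero), one_div, mul_inv]
  rw [expSum_apply, sum_congr rfl fun n _ => hbinom n, sum_range_sum_range_sub_eq hvanish hN,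
    expSum_apply, expSum_apply]
  simp only [map_sum, map_smul, smul_sum, smul_smul]

/-- Independent of the truncation point of the series, by `locExp_apply`. -/
noncomputable def locExp (a : Module.End F W) (ha : IsLocallyNilpotent a) : Module.End F W where
  toFun w := expSum a (ha w).choose w
  map_add' w w' := by
    have hw := (ha w).choose_spec
    have hw' := (ha w').choose_spec
    have hsum : (a ^ ((ha w).choose + (ha w').choose)) (w + w') = 0 := by
      rw [map_add, Module.End.pow_map_zero_of_le le_self_add hw,
        Module.End.pow_map_zero_of_le le_add_self hw', add_zero]
    change expSum a _ (w + w') = expSum a _ w + expSum a _ w'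
    rw [expSum_apply_eq_of_pow_apply_eq_zero (ha (w + w')).choose_spec hsum, map_add,
      expSum_apply_eq_of_pow_apply_eq_zero (Module.End.pow_map_zero_of_le le_self_add hw) hw,
      expSum_apply_eq_of_pow_apply_eq_zero (Module.End.pow_map_zero_of_le le_add_self hw') hw']
  map_smul' c w := by
    have hcw : (a ^ (ha w).choose) (c • w) = 0 := by rw [map_smul, (ha w).choose_spec, smul_zero]
    change expSum a _ (c • w) = c • expSum a _ w
    rw [expSum_apply_eq_of_pow_apply_eq_zero (ha (c • w)).choose_spec hcw, map_smul]

theorem locExp_apply {a : Module.End F W} (ha : IsLocallyNilpotent a) {w : W} {m : ℕ}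
    (hm : (a ^ m) w = 0) : locExp a ha w = expSum a m w :=
  expSum_apply_eq_of_pow_apply_eq_zero (ha w).choose_spec hm

theorem locExp_smul_apply {a : Module.End F W} (ha : IsLocallyNilpotent a) (t : F) {w : W}
    {m : ℕ} (hm : (a ^ m) w = 0) :
    locExp (t • a) (ha.smul t) w = ∑ k ∈ range m, (t ^ k * (k ! : F)⁻¹) • (a ^ k) w := by
  have htm : ((t • a) ^ m) w = 0 := by
    rw [_root_.smul_pow, LinearMap.smul_apply, hm, smul_zero]
  rw [locExp_apply _ htm, expSum_smul_apply]

theorem apply_locExp_of_comp_eq_comp {f : W →ₗ[F] W'} {a : Module.End F W}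
    {a' : Module.End F W'} (ha : IsLocallyNilpotent a) (ha' : IsLocallyNilpotent a')
    (h : f ∘ₗ a = a' ∘ₗ f) (w : W) : f (locExp a ha w) = locExp a' ha' (f w) := by
  obtain ⟨m, hm⟩ := ha w
  have hm' : (a' ^ m) (f w) = 0 := by rw [← pow_apply_of_comp_eq_comp h, hm, map_zero]
  rw [locExp_apply ha hm, locExp_apply ha' hm', apply_expSum_of_comp_eq_comp h]

theorem comp_locExp_of_comp_eq_comp {f : W →ₗ[F] W'} {a : Module.End F W}
    {a' : Module.End F W'} (ha : IsLocallyNilpotent a) (ha' : IsLocallyNilpotent a')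
    (h : f ∘ₗ a = a' ∘ₗ f) : f ∘ₗ locExp a ha = locExp a' ha' ∘ₗ f :=
  LinearMap.ext (apply_locExp_of_comp_eq_comp ha ha' h)

theorem locExp_eq_one {a : Module.End F W} (ha : IsLocallyNilpotent a) (h : a = 0) :
    locExp a ha = 1 := by
  ext w
  rw [locExp_apply ha (show (a ^ 1) w = 0 by simp [h])]
  simp [expSum]

theorem locExp_zero_smul {a : Module.End F W} (ha : IsLocallyNilpotent a) :
    locExp ((0 : F) • a) (ha.smul 0) = 1 :=
  locExp_eq_one _ (zero_smul F a)

theorem locExp_add_of_commute [CharZero F] {a b : Module.End F W} (hab : Commute a b)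
    (ha : IsLocallyNilpotent a) (hb : IsLocallyNilpotent b)
    (hab' : IsLocallyNilpotent (a + b)) :
    locExp (a + b) hab' = locExp a ha * locExp b hb := by
  ext w
  obtain ⟨P, hP⟩ := ha w
  obtain ⟨Q, hQ⟩ := hb w
  obtain ⟨K, hK⟩ := hab' w
  have hPb : (a ^ P) (expSum b Q w) = 0 := by
    rw [apply_expSum_of_comp_eq_comp (hab.pow_left P).eq, hP, map_zero]
  rw [Module.End.mul_apply, locExp_apply hb hQ, locExp_apply ha hPb,
    locExp_apply hab' (Module.End.pow_map_zero_of_le (le_add_self : K ≤ P + Q + K) hK),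
    expSum_add_apply_of_commute hab hP hQ le_self_add]

theorem locExp_add_smul [CharZero F] {a : Module.End F W} (ha : IsLocallyNilpotent a)
    (t t' : F) :
    locExp ((t + t') • a) (ha.smul _) =
      locExp (t • a) (ha.smul t) * locExp (t' • a) (ha.smul t') := by
  rw [← locExp_add_of_commute (((Commute.refl a).smul_left t).smul_right t') _ _
    (add_smul t t' a ▸ ha.smul (t + t'))]
  congr 1
  exact add_smul t t' a

section Tensor

variable {Wi Wj : Type*} [AddCommGroup Wi] [Module F Wi] [AddCommGroup Wj] [Module F Wj]

theorem mk_comp_eq_map_id_comp (u : Wi) (b : Module.End F Wj) :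
    TensorProduct.mk F Wi Wj u ∘ₗ b =
      TensorProduct.map LinearMap.id b ∘ₗ TensorProduct.mk F Wi Wj u := by
  ext w
  simp

theorem flip_mk_comp_eq_map_comp (w : Wj) (a : Module.End F Wi) :
    (TensorProduct.mk F Wi Wj).flip w ∘ₗ a =
      TensorProduct.map a LinearMap.id ∘ₗ (TensorProduct.mk F Wi Wj).flip w := by
  ext u
  simp

theorem commute_map_id_map_id (a : Module.End F Wi) (b : Module.End F Wj) :
    Commute (TensorProduct.map a (LinearMap.id : Module.End F Wj))
      (TensorProduct.map (LinearMap.id : Module.End F Wi) b) := by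
  rw [Commute, SemiconjBy, Module.End.mul_eq_comp, Module.End.mul_eq_comp,
    ← TensorProduct.map_comp, ← TensorProduct.map_comp]
  simp

theorem comp_smul_eq_map_add_map_comp {c : Module.End F W} {a : Module.End F Wi}
    {b : Module.End F Wj} {e : W ≃ₗ[F] Wi ⊗[F] Wj}
    (he : e.toLinearMap ∘ₗ c =
      (TensorProduct.map a LinearMap.id + TensorProduct.map LinearMap.id b) ∘ₗ e.toLinearMap)
    (t : F) :
    e.toLinearMap ∘ₗ (t • c) =
      (TensorProduct.map (t • a) LinearMap.id + TensorProduct.map LinearMap.id (t • b)) ∘ₗ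
        e.toLinearMap := by
  rw [LinearMap.comp_smul, he, TensorProduct.map_smul_left, TensorProduct.map_smul_right,
    ← smul_add, LinearMap.smul_comp]

theorem expSum_map_add_map_tmul [CharZero F] (a : Module.End F Wi) (b : Module.End F Wj)
    {u : Wi} {w : Wj} {P Q N : ℕ} (hP : (a ^ P) u = 0) (hQ : (b ^ Q) w = 0) (hN : P + Q ≤ N) :
    expSum (TensorProduct.map a LinearMap.id + TensorProduct.map LinearMap.id b) N (u ⊗ₜ w) =
      expSum a P u ⊗ₜ expSum b Q w := by
  have hu (w : Wj) := apply_expSum_of_comp_eq_comp (flip_mk_comp_eq_map_comp w a) P u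
  have hw := apply_expSum_of_comp_eq_comp (mk_comp_eq_map_id_comp u b) Q w
  simp only [LinearMap.flip_apply, TensorProduct.mk_apply] at hu hw
  have hPu : (TensorProduct.map a LinearMap.id ^ P) (u ⊗ₜ[F] w) = 0 := by simp [hP]
  have hQw : (TensorProduct.map LinearMap.id b ^ Q) (u ⊗ₜ[F] w) = 0 := by simp [hQ]
  rw [expSum_add_apply_of_commute (commute_map_id_map_id a b) hPu hQw hN, ← hw, hu]

theorem comp_locExp_eq_map_comp [CharZero F] {a : Module.End F Wi} {b : Module.End F Wj}
    {c : Module.End F W} (ha : IsLocallyNilpotent a) (hb : IsLocallyNilpotent b)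
    (hc : IsLocallyNilpotent c) (e : W ≃ₗ[F] Wi ⊗[F] Wj)
    (he : e.toLinearMap ∘ₗ c =
      (TensorProduct.map a LinearMap.id + TensorProduct.map LinearMap.id b) ∘ₗ e.toLinearMap) :
    e.toLinearMap ∘ₗ locExp c hc =
      TensorProduct.map (locExp a ha) (locExp b hb) ∘ₗ e.toLinearMap := by
  suffices h : e.toLinearMap ∘ₗ locExp c hc ∘ₗ e.symm.toLinearMap =
      TensorProduct.map (locExp a ha) (locExp b hb) by
    rw [← h]
    ext z
    simp
  refine TensorProduct.ext' fun u w => ?_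
  obtain ⟨P, hP⟩ := ha u
  obtain ⟨Q, hQ⟩ := hb w
  obtain ⟨K, hK⟩ := hc (e.symm (u ⊗ₜ w))
  have he' := apply_expSum_of_comp_eq_comp he (P + Q + K) (e.symm (u ⊗ₜ w))
  simp only [LinearEquiv.coe_coe, LinearEquiv.apply_symm_apply] at he'
  simp only [LinearMap.comp_apply, LinearEquiv.coe_coe]
  rw [locExp_apply hc (Module.End.pow_map_zero_of_le (le_add_self : K ≤ P + Q + K) hK), he',
    expSum_map_add_map_tmul a b hP hQ le_self_add, TensorProduct.map_tmul, locExp_apply ha hP,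
    locExp_apply hb hQ]

end Tensor

noncomputable def expPoly (a : Module.End F W) (ξ : Module.Dual F W) (v : W) (n : ℕ) : F[X] :=
  ∑ k ∈ range n, C ((k ! : F)⁻¹ * ξ ((a ^ k) v)) * X ^ k

theorem eval_expPoly {a : Module.End F W} (ha : IsLocallyNilpotent a) (ξ : Module.Dual F W)
    {v : W} {n : ℕ} (hn : (a ^ n) v = 0) (t : F) :
    (expPoly a ξ v n).eval t = ξ (locExp (t • a) (ha.smul t) v) := by
  rw [locExp_smul_apply ha t hn, expPoly, eval_finsetSum, map_sum]
  refine sum_congr rfl fun k _ => ?_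
  rw [eval_mul, eval_C, eval_pow, eval_X, map_smul, smul_eq_mul]
  ring

theorem coeff_expPoly (a : Module.End F W) (ξ : Module.Dual F W) (v : W) {n k : ℕ}
    (hk : k < n) : (expPoly a ξ v n).coeff k = (k ! : F)⁻¹ * ξ ((a ^ k) v) := by
  simp only [expPoly, finsetSum_coeff, coeff_C_mul_X_pow]
  rw [sum_ite_eq (range n) k, if_pos (mem_range.2 hk)]

theorem derivative_eval_zero_expPoly (a : Module.End F W) (ξ : Module.Dual F W) (v : W)
    {n : ℕ} (hn : 1 < n) : (expPoly a ξ v n).derivative.eval 0 = ξ (a v) := by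
  rw [← coeff_zero_eq_eval_zero, coeff_derivative, coeff_expPoly a ξ v hn]
  simp

theorem apply_pow_eq_zero_of_forall_apply_locExp_smul_eq_zero [CharZero F]
    {a : Module.End F W} (ha : IsLocallyNilpotent a) {ξ : Module.Dual F W} {v : W}
    (h : ∀ t : F, ξ (locExp (t • a) (ha.smul t) v) = 0) (k : ℕ) : ξ ((a ^ k) v) = 0 := by
  obtain ⟨n, hn⟩ := ha v
  have hkn : (a ^ (n + k + 1)) v = 0 := Module.End.pow_map_zero_of_le (by omega) hn
  have hzero : expPoly a ξ v (n + k + 1) = 0 :=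
    Polynomial.funext fun t => by rw [eval_expPoly ha ξ hkn, h, eval_zero]
  have hcoeff := coeff_expPoly a ξ v (show k < n + k + 1 by omega)
  rw [hzero, coeff_zero, eq_comm, mul_eq_zero] at hcoeff
  exact hcoeff.resolve_left (inv_ne_zero (Nat.cast_ne_zero.2 k.factorial_ne_zero))

def cyclicSubmodule (a : Module.End F W) (v : W) : Submodule F W :=
  Submodule.span F (Set.range fun k : ℕ => (a ^ k) v)

theorem mem_cyclicSubmodule_self (a : Module.End F W) (v : W) : v ∈ cyclicSubmodule a v :=
  Submodule.subset_span ⟨0, by simp⟩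

theorem apply_mem_cyclicSubmodule (a : Module.End F W) (v : W) {w : W}
    (hw : w ∈ cyclicSubmodule a v) : a w ∈ cyclicSubmodule a v := by
  refine (Submodule.span_le (p := (cyclicSubmodule a v).comap a)).2 ?_ hw
  rintro _ ⟨k, rfl⟩
  exact Submodule.subset_span ⟨k + 1, by simp only [pow_succ', Module.End.mul_apply]⟩

theorem cyclicSubmodule_le {a : Module.End F W} {v : W} {U : Submodule F W} (hv : v ∈ U)
    (hU : ∀ u ∈ U, a u ∈ U) : cyclicSubmodule a v ≤ U := by
  refine Submodule.span_le.2 ?_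
  rintro _ ⟨k, rfl⟩
  induction k with
  | zero => simpa using hv
  | succ k ih => simpa only [pow_succ', Module.End.mul_apply, SetLike.mem_coe] using hU _ ih

theorem finiteDimensional_cyclicSubmodule {a : Module.End F W} {v : W} {n : ℕ}
    (hn : (a ^ n) v = 0) : FiniteDimensional F (cyclicSubmodule a v) := by
  refine FiniteDimensional.span_of_finite F
    (((Finset.range (n + 1)).finite_toSet.image fun k => (a ^ k) v).subset ?_)
  rintro _ ⟨k, rfl⟩
  by_cases hk : k ≤ n
  · exact ⟨k, by simp; omega, rfl⟩
  · exact ⟨n, by simp, by simp only [hn, Module.End.pow_map_zero_of_le (by omega : n ≤ k) hn]⟩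

end LocallyNilpotentExp

namespace TannakaSetting

open Finset Polynomial
open scoped Nat

variable {F : Type u} [Field F] {g : Type v} [LieRing g] [LieAlgebra F g] (D : TannakaSetting F g)

/-- The defining conditions of `Lie(M)` apart from the existence of `δ_y` and from
`y_V ∈ End_{V^du}(V)`. -/
structure IsPrimitive (y : ∀ i, Module.End F (D.V i)) : Prop where
  comp_eq_comp : ∀ (i j : D.ι) (f : D.V i →ₗ[F] D.V j), D.IsHom f → f ∘ₗ y i = y j ∘ₗ f
  tensor : ∀ (i j k : D.ι) (e : D.V k ≃ₗ[F] (D.V i ⊗[F] D.V j)), D.IsTensorProd i j k e →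
    e.toLinearMap ∘ₗ y k =
      (TensorProduct.map (y i) LinearMap.id + TensorProduct.map LinearMap.id (y j)) ∘ₗ
        e.toLinearMap
  triv : ∀ i, D.IsTrivOneDim i → y i = 0

/-- A relation rather than a function `f ↦ d`: for `y ∉ Lie(M)` the value `ξ (y u)` may depend
on the chosen representation `f = f_{ξ u}`. -/
def HasMatCoefDeriv (y : ∀ i, Module.End F (D.V i)) (f : ↥D.M → F) (d : F) : Prop :=
  ∃ (k : D.ι) (ξ : Module.Dual F (D.V k)) (u : D.V k),
    ξ ∈ D.du k ∧ f = D.matCoef k ξ u ∧ ξ (y k u) = d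

def IsExpSeries (x : g) (t : F) (i : D.ι) (f : Module.End F (D.V i)) : Prop :=
  ∀ v : D.V i, ∃ N : ℕ, ∀ n ≥ N,
    f v = ∑ k ∈ Finset.range n,
      (t ^ k * ((Nat.factorial k : F)⁻¹)) • (((D.ρ i x : Module.End F (D.V i)) ^ k) v)

theorem isPrimitive_zero : D.IsPrimitive fun _ => 0 where
  comp_eq_comp _ _ _ _ := by simp
  tensor _ _ _ _ _ := by simp [TensorProduct.map_zero_left, TensorProduct.map_zero_right]
  triv _ _ := rfl

theorem isPrimitive_smul_rho (c : F) (x : g) :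
    D.IsPrimitive fun i => c • (D.ρ i x : Module.End F (D.V i)) where
  comp_eq_comp i j f hf := by rw [LinearMap.comp_smul, LinearMap.smul_comp, hf x]
  tensor i j k e he := comp_smul_eq_map_add_map_comp (he x) c
  triv i hi := by rw [hi.2 x, smul_zero]

variable {D}

theorem IsPrimitive.of_mem_LieM {y : ∀ i, Module.End F (D.V i)} (hy : y ∈ D.LieM) :
    D.IsPrimitive y :=
  ⟨hy.1.2, hy.2.1, hy.2.2.1⟩

theorem IsGoodSetting.ext_of_du (HG : D.IsGoodSetting) {i : D.ι} {v w : D.V i}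
    (h : ∀ ξ ∈ D.du i, ξ v = ξ w) : v = w := by
  by_contra hne
  obtain ⟨ξ, hξ, hξne⟩ := HG.separating i (v - w) (sub_ne_zero.2 hne)
  exact hξne (by rw [map_sub, h ξ hξ, sub_self])

theorem IsSumProd.isHom_fst_comp {i j k : D.ι} {e : D.V k ≃ₗ[F] (D.V i × D.V j)}
    (he : D.IsSumProd i j k e) : D.IsHom (LinearMap.fst F (D.V i) (D.V j) ∘ₗ e.toLinearMap) :=
  fun z => by rw [LinearMap.comp_assoc, he z, ← LinearMap.comp_assoc]; rfl

theorem IsSumProd.isHom_snd_comp {i j k : D.ι} {e : D.V k ≃ₗ[F] (D.V i × D.V j)}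
    (he : D.IsSumProd i j k e) : D.IsHom (LinearMap.snd F (D.V i) (D.V j) ∘ₗ e.toLinearMap) :=
  fun z => by rw [LinearMap.comp_assoc, he z, ← LinearMap.comp_assoc]; rfl

theorem IsSumProd.dualMap_apply_symm {i j k : D.ι} {e : D.V k ≃ₗ[F] (D.V i × D.V j)}
    (he : D.IsSumProd i j k e) {z : ∀ i, Module.End F (D.V i)}
    (hz : ∀ (i j : D.ι) (f : D.V i →ₗ[F] D.V j), D.IsHom f → f ∘ₗ z i = z j ∘ₗ f)
    (ξ₁ : Module.Dual F (D.V i)) (ξ₂ : Module.Dual F (D.V j)) (u₁ : D.V i) (u₂ : D.V j) :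
    e.toLinearMap.dualMap ((LinearMap.fst F (D.V i) (D.V j)).dualMap ξ₁ +
        (LinearMap.snd F (D.V i) (D.V j)).dualMap ξ₂) (z k (e.symm (u₁, u₂))) =
      ξ₁ (z i u₁) + ξ₂ (z j u₂) := by
  have h₁ := LinearMap.congr_fun (hz k i _ he.isHom_fst_comp) (e.symm (u₁, u₂))
  have h₂ := LinearMap.congr_fun (hz k j _ he.isHom_snd_comp) (e.symm (u₁, u₂))
  simp only [LinearMap.comp_apply, LinearEquiv.coe_coe, LinearEquiv.apply_symm_apply,
    LinearMap.fst_apply, LinearMap.snd_apply] at h₁ h₂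
  simp only [LinearMap.dualMap_apply, LinearMap.add_apply, LinearEquiv.coe_coe,
    LinearMap.fst_apply, LinearMap.snd_apply, h₁, h₂]

theorem tensorDual_tmul {i j : D.ι} (ξ₁ : Module.Dual F (D.V i)) (ξ₂ : Module.Dual F (D.V j))
    (u₁ : D.V i) (u₂ : D.V j) : D.tensorDual ξ₁ ξ₂ (u₁ ⊗ₜ u₂) = ξ₁ u₁ * ξ₂ u₂ := by
  simp [tensorDual]

section MatCoefDeriv

variable (HG : D.IsGoodSetting) {y : ∀ i, Module.End F (D.V i)}

theorem hasMatCoefDeriv_matCoef {i : D.ι} {ξ : Module.Dual F (D.V i)} (hξ : ξ ∈ D.du i)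
    (v : D.V i) : D.HasMatCoefDeriv y (D.matCoef i ξ v) (ξ (y i v)) :=
  ⟨i, ξ, v, hξ, rfl, rfl⟩

theorem HasMatCoefDeriv.mem_coordRing {f : ↥D.M → F} {d : F} (h : D.HasMatCoefDeriv y f d) :
    f ∈ D.coordRing := by
  obtain ⟨k, ξ, u, hξ, rfl, -⟩ := h
  exact ⟨k, ξ, u, hξ, rfl⟩

theorem HasMatCoefDeriv.const_mul {f : ↥D.M → F} {d : F} (h : D.HasMatCoefDeriv y f d)
    (c : F) : D.HasMatCoefDeriv y (fun m => c * f m) (c * d) := by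
  obtain ⟨k, ξ, u, hξ, rfl, rfl⟩ := h
  exact ⟨k, c • ξ, u, Submodule.smul_mem _ c hξ, rfl, rfl⟩

include HG in
theorem hasMatCoefDeriv_const (hy : D.IsPrimitive y) (a : F) :
    D.HasMatCoefDeriv y (fun _ => a) 0 := by
  obtain ⟨i, hi⟩ := HG.exists_triv
  have : Nontrivial (D.V i) := Module.nontrivial_of_finrank_eq_succ hi.1
  obtain ⟨v, hv⟩ := exists_ne (0 : D.V i)
  obtain ⟨ξ, hξ, hξv⟩ := HG.separating i v hv
  refine ⟨i, (a * (ξ v)⁻¹) • ξ, v, Submodule.smul_mem _ _ hξ, funext fun m => ?_, ?_⟩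
  · simp [matCoef, m.2.2.2 i hi, hξv]
  · simp [hy.triv i hi]

include HG in
theorem HasMatCoefDeriv.add (hy : D.IsPrimitive y) {f₁ f₂ : ↥D.M → F} {d₁ d₂ : F}
    (h₁ : D.HasMatCoefDeriv y f₁ d₁) (h₂ : D.HasMatCoefDeriv y f₂ d₂) :
    D.HasMatCoefDeriv y (fun m => f₁ m + f₂ m) (d₁ + d₂) := by
  obtain ⟨k₁, ξ₁, u₁, hξ₁, rfl, rfl⟩ := h₁
  obtain ⟨k₂, ξ₂, u₂, hξ₂, rfl, rfl⟩ := h₂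
  obtain ⟨k, e, he⟩ := HG.exists_sum k₁ k₂
  refine ⟨k, _, e.symm (u₁, u₂), (HG.du_sum k₁ k₂ k e he _).2 ⟨ξ₁, hξ₁, ξ₂, hξ₂, rfl⟩,
    funext fun m => ?_, he.dualMap_apply_symm hy.comp_eq_comp ξ₁ ξ₂ u₁ u₂⟩
  exact (he.dualMap_apply_symm m.2.1.2 ξ₁ ξ₂ u₁ u₂).symm

include HG in
theorem HasMatCoefDeriv.mul (hy : D.IsPrimitive y) {f₁ f₂ : ↥D.M → F} {d₁ d₂ : F}
    (h₁ : D.HasMatCoefDeriv y f₁ d₁) (h₂ : D.HasMatCoefDeriv y f₂ d₂) :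
    D.HasMatCoefDeriv y (fun m => f₁ m * f₂ m) (d₁ * f₂ D.oneM + f₁ D.oneM * d₂) := by
  obtain ⟨k₁, ξ₁, u₁, hξ₁, rfl, rfl⟩ := h₁
  obtain ⟨k₂, ξ₂, u₂, hξ₂, rfl, rfl⟩ := h₂
  obtain ⟨k, e, he⟩ := HG.exists_tensor k₁ k₂
  refine ⟨k, e.toLinearMap.dualMap (D.tensorDual ξ₁ ξ₂), e.symm (u₁ ⊗ₜ u₂),
    HG.du_tensor k₁ k₂ k e he ξ₁ hξ₁ ξ₂ hξ₂, funext fun m => ?_, ?_⟩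
  · have hm := LinearMap.congr_fun (m.2.2.1 k₁ k₂ k e he) (e.symm (u₁ ⊗ₜ u₂))
    simp only [LinearMap.comp_apply, LinearEquiv.coe_coe, LinearEquiv.apply_symm_apply,
      TensorProduct.map_tmul] at hm
    simp [matCoef, hm, tensorDual_tmul]
  · have hyk := LinearMap.congr_fun (hy.tensor k₁ k₂ k e he) (e.symm (u₁ ⊗ₜ u₂))
    simp only [LinearMap.comp_apply, LinearEquiv.coe_coe, LinearEquiv.apply_symm_apply,
      LinearMap.add_apply, TensorProduct.map_tmul, LinearMap.id_apply] at hyk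
    simp [matCoef, oneM, hyk, tensorDual_tmul]

include HG in
theorem HasMatCoefDeriv.eval (hy : D.IsPrimitive y) {h : ↥D.M → F} {c : F}
    (hh : D.HasMatCoefDeriv y h c) (h1 : h D.oneM = 0) (q : F[X]) :
    D.HasMatCoefDeriv y (fun m => q.eval (h m)) (q.derivative.eval 0 * c) := by
  induction q using Polynomial.induction_on with
  | C a => simpa using hasMatCoefDeriv_const HG hy a
  | add p q hp hq => simpa [add_mul] using hp.add HG hy hq
  | monomial n a ih =>
    convert ih.mul HG hy hh using 1
    · funext m
      simp [pow_succ, mul_assoc]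
    · rcases n with _ | n <;> simp [h1]

end MatCoefDeriv

section OneParameter

variable {x : g} (hnilp : ∀ i, IsLocallyNilpotent (D.ρ i x : Module.End F (D.V i)))

noncomputable def expFam (t : F) : ∀ i, Module.End F (D.V i) :=
  fun i => locExp (t • D.ρ i x) ((hnilp i).smul t)

theorem isExpSeries_expFam (t : F) (i : D.ι) : D.IsExpSeries x t i (expFam hnilp t i) := by
  intro v
  obtain ⟨K, hK⟩ := hnilp i v
  exact ⟨K, fun n hn => locExp_smul_apply (hnilp i) t (Module.End.pow_map_zero_of_le hn hK)⟩

theorem expFam_mem_M [CharZero F]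
    (hdu : ∀ (t : F) (i : D.ι) (f : Module.End F (D.V i)), D.IsExpSeries x t i f →
      D.PreservesDu i f) (t : F) :
    expFam hnilp t ∈ D.M := by
  have hprim := D.isPrimitive_smul_rho t x
  refine ⟨⟨fun i => hdu t i _ (isExpSeries_expFam hnilp t i), fun i j f hf => ?_⟩,
    fun i j k e he => ?_, fun i hi => locExp_eq_one _ (hprim.triv i hi)⟩
  · exact comp_locExp_of_comp_eq_comp _ _ (hprim.comp_eq_comp i j f hf)
  · exact comp_locExp_eq_map_comp _ _ _ e (hprim.tensor i j k e he)

theorem isExpOf_expFam {t : F} (hmem : expFam hnilp t ∈ D.M) :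
    D.IsExpOf x t (expFam hnilp t) :=
  ⟨hmem, isExpSeries_expFam hnilp t⟩

theorem IsExpOf.eq_expFam {t : F} {m : ∀ i, Module.End F (D.V i)} (hm : D.IsExpOf x t m) :
    m = expFam hnilp t := by
  funext i
  ext v
  obtain ⟨N, hN⟩ := hm.2 i v
  obtain ⟨N', hN'⟩ := isExpSeries_expFam hnilp t i v
  rw [hN _ (le_max_left N N'), hN' _ (le_max_right N N')]

theorem expFam_zero : expFam hnilp 0 = 1 :=
  funext fun i => locExp_zero_smul (hnilp i)

theorem expFam_add [CharZero F] (t t' : F) :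
    expFam hnilp (t + t') = expFam hnilp t * expFam hnilp t' :=
  funext fun i => locExp_add_smul (hnilp i) t t'

include hnilp in
theorem matCoef_eq_eval_expPoly {t : F} {m : ↥D.M} (hm : D.IsExpOf x t m.1) {i : D.ι}
    (ξ : Module.Dual F (D.V i)) {v : D.V i} {n : ℕ}
    (hn : ((D.ρ i x : Module.End F (D.V i)) ^ n) v = 0) :
    D.matCoef i ξ v m = (expPoly (D.ρ i x) ξ v n).eval t := by
  rw [eval_expPoly (hnilp i) ξ hn, matCoef, hm.eq_expFam hnilp, expFam]

include hnilp in
theorem exists_eval_eq_of_mem_coordRing {f : ↥D.M → F} (hf : f ∈ D.coordRing) :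
    ∃ p : F[X], ∀ (t : F) (m : ↥D.M), D.IsExpOf x t m.1 → f m = p.eval t := by
  obtain ⟨i, ξ, v, -, rfl⟩ := hf
  obtain ⟨n, hn⟩ := hnilp i v
  exact ⟨_, fun t m hm => matCoef_eq_eval_expPoly hnilp hm ξ hn⟩

theorem exists_matCoef_expFam_eq_add (HG : D.IsGoodSetting) (hx : x ≠ 0) :
    ∃ (i₀ : D.ι) (v₀ : D.V i₀) (ξ₀ : Module.Dual F (D.V i₀)),
      ξ₀ ∈ D.du i₀ ∧ ∀ t, ξ₀ (expFam hnilp t i₀ v₀) = ξ₀ v₀ + t := by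
  obtain ⟨i₀, hi₀⟩ : ∃ i, (D.ρ i x : Module.End F (D.V i)) ≠ 0 := by
    by_contra! h
    exact hx (HG.faithful x h)
  -- with `x v₀ ≠ 0 = x (x v₀)` one has `exp (t x) v₀ = v₀ + t • x v₀`
  obtain ⟨v₀, hxv₀, hxxv₀⟩ := (hnilp i₀).exists_apply_ne_zero_apply_apply_eq_zero hi₀
  obtain ⟨ξ, hξ, hξv₀⟩ := HG.separating i₀ _ hxv₀
  refine ⟨i₀, v₀, (ξ (D.ρ i₀ x v₀))⁻¹ • ξ, Submodule.smul_mem _ _ hξ, fun t => ?_⟩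
  have h2 : ((D.ρ i₀ x : Module.End F (D.V i₀)) ^ 2) v₀ = 0 := by
    rwa [sq, Module.End.mul_apply]
  rw [expFam, locExp_smul_apply (hnilp i₀) t h2]
  simp [sum_range_succ]
  field_simp

end OneParameter

section Coordinate

variable (HG : D.IsGoodSetting) {x : g}
  {hnilp : ∀ i, IsLocallyNilpotent (D.ρ i x : Module.End F (D.V i))}
  {i₀ : D.ι} {v₀ : D.V i₀} {ξ₀ : Module.Dual F (D.V i₀)} (hξ₀ : ξ₀ ∈ D.du i₀)
  (hcoord : ∀ t, ξ₀ (expFam hnilp t i₀ v₀) = ξ₀ v₀ + t)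

include hcoord in
theorem IsExpOf.coord_eq {t : F} {m : ↥D.M} (hm : D.IsExpOf x t m.1) :
    D.matCoef i₀ ξ₀ v₀ m - ξ₀ v₀ = t := by
  rw [matCoef, hm.eq_expFam hnilp, hcoord, add_sub_cancel_left]

include HG hξ₀ in
theorem hasMatCoefDeriv_eval_coord {y : ∀ i, Module.End F (D.V i)} (hy : D.IsPrimitive y)
    (q : F[X]) :
    D.HasMatCoefDeriv y (fun m => q.eval (D.matCoef i₀ ξ₀ v₀ m - ξ₀ v₀))
      (q.derivative.eval 0 * ξ₀ (y i₀ v₀)) := by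
  have hcoordFun :=
    (hasMatCoefDeriv_matCoef hξ₀ v₀).add HG hy (hasMatCoefDeriv_const HG hy (-ξ₀ v₀))
  simpa [sub_eq_add_neg] using hcoordFun.eval HG hy (by simp [matCoef, oneM]) q

include HG hξ₀ in
theorem hasMatCoefDeriv_sub_eval_coord {y : ∀ i, Module.End F (D.V i)} (hy : D.IsPrimitive y)
    {i : D.ι} {ξ : Module.Dual F (D.V i)} (hξ : ξ ∈ D.du i) (v : D.V i) (q : F[X]) :
    D.HasMatCoefDeriv y (fun m => D.matCoef i ξ v m - q.eval (D.matCoef i₀ ξ₀ v₀ m - ξ₀ v₀))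
      (ξ (y i v) - q.derivative.eval 0 * ξ₀ (y i₀ v₀)) := by
  simpa [sub_eq_add_neg] using (hasMatCoefDeriv_matCoef hξ v).add HG hy
    ((hasMatCoefDeriv_eval_coord HG hξ₀ hy q).const_mul (-1))

include hcoord in
theorem matCoef_sub_eval_coord_eq_zero {t : F} {m : ↥D.M} (hm : D.IsExpOf x t m.1) {i : D.ι}
    (ξ : Module.Dual F (D.V i)) {v : D.V i} {n : ℕ}
    (hn : ((D.ρ i x : Module.End F (D.V i)) ^ n) v = 0) :
    D.matCoef i ξ v m - (expPoly (D.ρ i x) ξ v n).eval (D.matCoef i₀ ξ₀ v₀ m - ξ₀ v₀) = 0 := by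
  rw [hm.coord_eq hcoord, matCoef_eq_eval_expPoly hnilp hm ξ hn, sub_self]

include HG hξ₀ hcoord in
theorem exists_mem_coordRing_eq_eval (p : F[X]) :
    ∃ f ∈ D.coordRing, ∀ (t : F) (m : ↥D.M), D.IsExpOf x t m.1 → f m = p.eval t :=
  ⟨_, (hasMatCoefDeriv_eval_coord HG hξ₀ D.isPrimitive_zero p).mem_coordRing,
    fun _ _ hm => by rw [hm.coord_eq hcoord]⟩

include HG hξ₀ hcoord in
theorem exists_isExpOf_of_forall_mem_coordRing (m : ↥D.M)
    (hm : ∀ f ∈ D.coordRing, (∀ m' : ↥D.M, (∃ t, D.IsExpOf x t m'.1) → f m' = 0) → f m = 0) :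
    ∃ t, D.IsExpOf x t m.1 := by
  set t := D.matCoef i₀ ξ₀ v₀ m - ξ₀ v₀
  suffices h : m.1 = expFam hnilp t from ⟨t, h ▸ isExpOf_expFam hnilp (h ▸ m.2)⟩
  funext i
  ext v
  refine HG.ext_of_du fun ξ hξ => ?_
  obtain ⟨n, hn⟩ := hnilp i v
  have hf := hasMatCoefDeriv_sub_eval_coord HG (v₀ := v₀) hξ₀ D.isPrimitive_zero hξ v
    (expPoly (D.ρ i x) ξ v n)
  have h0 := hm _ hf.mem_coordRing fun m' ⟨t', ht'⟩ =>
    matCoef_sub_eval_coord_eq_zero hcoord ht' ξ hn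
  rw [sub_eq_zero] at h0
  rw [show ξ (m.1 i v) = D.matCoef i ξ v m from rfl, h0, eval_expPoly (hnilp i) ξ hn]
  rfl

include HG hξ₀ hcoord in
theorem exists_eq_smul_rho_of_mem_lieOf {y : ∀ i, Module.End F (D.V i)}
    (hy : y ∈ D.LieOf {m : ↥D.M | ∃ t, D.IsExpOf x t m.1}) :
    ∃ c : F, y = fun i => c • (D.ρ i x : Module.End F (D.V i)) := by
  refine ⟨ξ₀ (y i₀ v₀), funext fun i => LinearMap.ext fun v => HG.ext_of_du fun ξ hξ => ?_⟩
  obtain ⟨n, hn⟩ := hnilp i v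
  have hn2 : ((D.ρ i x : Module.End F (D.V i)) ^ (n + 2)) v = 0 :=
    Module.End.pow_map_zero_of_le (by omega) hn
  obtain ⟨k, ξ', u, hξ', hf, hd⟩ := hasMatCoefDeriv_sub_eval_coord HG (v₀ := v₀) hξ₀
    (IsPrimitive.of_mem_LieM hy.1) hξ v (expPoly (D.ρ i x) ξ v (n + 2))
  have h0 := hy.2 k ξ' u hξ' fun m ⟨t, ht⟩ => by
    rw [← congrFun hf m]
    exact matCoef_sub_eval_coord_eq_zero hcoord ht ξ hn2
  rw [h0, derivative_eval_zero_expPoly _ _ _ (by omega), eq_comm, sub_eq_zero] at hd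
  rw [hd, LinearMap.smul_apply, map_smul, smul_eq_mul, mul_comm]

end Coordinate

theorem smul_rho_mem_lieOf [CharZero F] (HG : D.IsGoodSetting) {x : g}
    (hnilp : ∀ i, IsLocallyNilpotent (D.ρ i x : Module.End F (D.V i)))
    (hdu : ∀ (t : F) (i : D.ι) (f : Module.End F (D.V i)), D.IsExpSeries x t i f →
      D.PreservesDu i f) (c : F) :
    (fun i => c • (D.ρ i x : Module.End F (D.V i))) ∈
      D.LieOf {m : ↥D.M | ∃ t, D.IsExpOf x t m.1} := by
  have hprim := D.isPrimitive_smul_rho c x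
  let u (t : F) : ↥D.M := ⟨expFam hnilp t, expFam_mem_M hnilp hdu t⟩
  have hu (t : F) : D.IsExpOf x t (u t).1 := isExpOf_expFam hnilp (u t).2
  refine ⟨⟨⟨fun i ξ hξ => ?_, hprim.comp_eq_comp⟩, hprim.tensor, hprim.triv, ?_⟩, ?_⟩
  · have h : (c • (D.ρ i x : Module.End F (D.V i))).dualMap ξ =
        c • (D.ρ i x : Module.End F (D.V i)).dualMap ξ := by
      ext
      simp
    rw [h]
    exact Submodule.smul_mem _ c (HG.du_g i x ξ hξ)
  · -- `δ f` is `c` times the linear coefficient of the polynomial `t ↦ f (exp (t x))`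
    refine ⟨fun f => c * (Classical.epsilon fun q : F[X] => ∀ t, f (u t) = q.eval t).coeff 1,
      fun i ξ v _ => ?_⟩
    obtain ⟨n, hn⟩ := hnilp i v
    have hn2 : ((D.ρ i x : Module.End F (D.V i)) ^ (n + 2)) v = 0 :=
      Module.End.pow_map_zero_of_le (by omega) hn
    have hq (t : F) := matCoef_eq_eval_expPoly hnilp (hu t) ξ hn2
    have hpoly : (Classical.epsilon fun q : F[X] => ∀ t, D.matCoef i ξ v (u t) = q.eval t) =
        expPoly (D.ρ i x) ξ v (n + 2) :=
      Polynomial.funext fun t =>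
        (Classical.epsilon_spec (p := fun q : F[X] => ∀ t, D.matCoef i ξ v (u t) = q.eval t)
          ⟨_, hq⟩ t).symm.trans (hq t)
    simp only [hpoly, coeff_expPoly _ _ _ (show 1 < n + 2 by omega)]
    simp
  · intro i ξ v _ hvan
    have h := apply_pow_eq_zero_of_forall_apply_locExp_smul_eq_zero (hnilp i)
      (fun t => hvan (u t) ⟨t, hu t⟩) 1
    simp only [pow_one] at h
    simp [h]

section LocallyFinite

variable {x : g} (hnilp : ∀ i, IsLocallyNilpotent (D.ρ i x : Module.End F (D.V i)))

theorem subtype_comp_subAct (s : D.SubIdx x) :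
    s.2.1.subtype ∘ₗ D.subAct x s = (D.ρ s.1 x : Module.End F (D.V s.1)) ∘ₗ s.2.1.subtype :=
  rfl

include hnilp in
theorem isLocallyNilpotent_subAct (s : D.SubIdx x) : IsLocallyNilpotent (D.subAct x s) :=
  (hnilp s.1).of_injective_comp s.2.1.injective_subtype (subtype_comp_subAct s)

noncomputable def subExpFam (t : F) : ∀ s : D.SubIdx x, Module.End F (D.subMod x s) :=
  fun s => locExp (t • D.subAct x s) ((isLocallyNilpotent_subAct hnilp s).smul t)

theorem subExpFam_mem_MFe [CharZero F] (t : F) : subExpFam hnilp t ∈ D.MFe x :=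
  ⟨fun _ _ _ hf => comp_locExp_of_comp_eq_comp _ _
      (by rw [LinearMap.comp_smul, LinearMap.smul_comp, hf]),
    fun _ _ _ E hE => comp_locExp_eq_map_comp _ _ _ E (comp_smul_eq_map_add_map_comp hE t),
    fun _ _ h => locExp_eq_one _ (by rw [h, smul_zero])⟩

theorem subExpFam_zero : subExpFam hnilp 0 = 1 :=
  funext fun s => locExp_zero_smul (isLocallyNilpotent_subAct hnilp s)

theorem subExpFam_add [CharZero F] (t t' : F) :
    subExpFam hnilp (t + t') = subExpFam hnilp t * subExpFam hnilp t' :=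
  funext fun s => locExp_add_smul (isLocallyNilpotent_subAct hnilp s) t t'

theorem isInduced_expFam (t : F) (i : D.ι) :
    D.IsInduced x (subExpFam hnilp t) i (expFam hnilp t i) := by
  intro U hU hxU u
  have h := subtype_comp_subAct (D := D) ⟨i, U, hU, hxU⟩
  exact (apply_locExp_of_comp_eq_comp (f := U.subtype) _ _
    (by rw [LinearMap.comp_smul, LinearMap.smul_comp, h]) u).symm

/-- A linear form vanishing on all `exp (t x) u` vanishes on the cyclic subspace of `u`; that
subspace is an object of `C(F·x)`, so naturality along its inclusion shows that every element
of `M(F·x)` maps `u` into it. -/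
theorem denseMFe_range_subExpFam [CharZero F] :
    D.DenseMFe x (Set.range (subExpFam hnilp)) := by
  intro s ψ u hψ m hm
  have hψpow : ∀ k, ψ ((D.subAct x s ^ k) u) = 0 :=
    apply_pow_eq_zero_of_forall_apply_locExp_smul_eq_zero (isLocallyNilpotent_subAct hnilp s)
      fun t => hψ _ ⟨t, rfl⟩
  obtain ⟨n, hn⟩ := hnilp s.1 u
  have hle : cyclicSubmodule (D.ρ s.1 x) (u : D.V s.1) ≤ s.2.1 :=
    cyclicSubmodule_le u.2 s.2.2.2
  let s' : D.SubIdx x := ⟨s.1, cyclicSubmodule _ (u : D.V s.1),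
    finiteDimensional_cyclicSubmodule hn, fun _ => apply_mem_cyclicSubmodule _ _⟩
  let u' : D.subMod x s' := ⟨u, mem_cyclicSubmodule_self _ _⟩
  have hker :
      cyclicSubmodule (D.ρ s.1 x) (u : D.V s.1) ≤ (LinearMap.ker ψ).map s.2.1.subtype := by
    refine Submodule.span_le.2 ?_
    rintro _ ⟨k, rfl⟩
    exact ⟨_, hψpow k, pow_apply_of_comp_eq_comp (subtype_comp_subAct s) k u⟩
  have hnat := LinearMap.congr_fun (hm.1 s' s (Submodule.inclusion hle) rfl) u'
  obtain ⟨w, hw, hwm⟩ := hker (m s' u').2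
  have hwm' : w = m s u := Subtype.ext (hwm.trans (congrArg Subtype.val hnat))
  rw [← hwm']
  exact hw

include hnilp in
theorem isIntLocFin [CharZero F]
    (hdu : ∀ (t : F) (i : D.ι) (f : Module.End F (D.V i)), D.IsExpSeries x t i f →
      D.PreservesDu i f) :
    D.IsIntLocFin x := by
  refine ⟨fun i v => ?_, Set.range (subExpFam hnilp), ?_, ⟨0, subExpFam_zero hnilp⟩, ?_,
    denseMFe_range_subExpFam hnilp, ?_⟩
  · obtain ⟨n, hn⟩ := hnilp i v
    exact ⟨_, mem_cyclicSubmodule_self _ v, finiteDimensional_cyclicSubmodule hn,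
      fun _ => apply_mem_cyclicSubmodule _ _⟩
  · rintro _ ⟨t, rfl⟩
    exact subExpFam_mem_MFe hnilp t
  · rintro _ ⟨t, rfl⟩ _ ⟨t', rfl⟩
    exact ⟨t + t', subExpFam_add hnilp t t'⟩
  · rintro _ ⟨t, rfl⟩ i
    exact ⟨_, isInduced_expFam hnilp t i, (expFam_mem_M hnilp hdu t).1.1 i⟩

end LocallyFinite

end TannakaSetting

variable {F : Type u} [Field F] [CharZero F] {g : Type v} [LieRing g] [LieAlgebra F g]

/-- **One-parameter unipotent subgroups of `M`.**
Let `x ∈ g`, `x ≠ 0`, act locally nilpotently on every object of `C`, with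
`exp(t x_V) ∈ End_{V^du}(V)` for all `t ∈ F`.  Then: (a) for every `t ∈ F` there is an element
`exp(t x) ∈ M` acting on every object by `exp(t x_V)`; (b) `u_x : (F,+) → M`, `t ↦ exp(t x)`,
is a morphism of monoids and a closed embedding of sets with coordinate rings (`F` carrying the
polynomial functions); (c) `Lie(U_x) = F·x` for the image `U_x` of `u_x`.  In particular, `x`
is an integrable locally finite element of `g`. -/
theorem stmt_16 (D : TannakaSetting F g) (HG : D.IsGoodSetting)
    (x : g) (hx : x ≠ 0)
    (hnilp : ∀ (i : D.ι) (v : D.V i), ∃ n : ℕ,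
      ((D.ρ i x : Module.End F (D.V i)) ^ n) v = 0)
    (hdu : ∀ (t : F) (i : D.ι) (f : Module.End F (D.V i)),
      (∀ v : D.V i, ∃ N : ℕ, ∀ n ≥ N,
        f v = ∑ k ∈ Finset.range n,
          (t ^ k * ((Nat.factorial k : F)⁻¹)) • (((D.ρ i x : Module.End F (D.V i)) ^ k) v)) →
      D.PreservesDu i f) :
    -- (a) the elements `exp(t x) ∈ M` exist:
    (∀ t : F, ∃ m, D.IsExpOf x t m) ∧
    -- (b) `u_x` is a morphism of monoids:
    (∀ m, D.IsExpOf x 0 m → m = 1) ∧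
    (∀ t t' m m' m'', D.IsExpOf x t m → D.IsExpOf x t' m' → D.IsExpOf x (t + t') m'' →
      m'' = m * m') ∧
    -- `u_x` is injective:
    (∀ t t' m, D.IsExpOf x t m → D.IsExpOf x t' m → t = t') ∧
    -- the comorphism of `u_x` exists (with values in the polynomial functions on `F`):
    (∀ f ∈ D.coordRing, ∃ p : Polynomial F,
      ∀ (t : F) (m : ↥D.M), D.IsExpOf x t m.1 → f m = p.eval t) ∧
    -- the comorphism is surjective onto the polynomial functions, so `u_x` is an embedding:
    (∀ p : Polynomial F, ∃ f ∈ D.coordRing,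
      ∀ (t : F) (m : ↥D.M), D.IsExpOf x t m.1 → f m = p.eval t) ∧
    -- the image `U_x` of `u_x` is Zariski closed in `M`:
    (∀ m : ↥D.M,
      (∀ f ∈ D.coordRing, (∀ m' : ↥D.M, (∃ t, D.IsExpOf x t m'.1) → f m' = 0) → f m = 0) →
      ∃ t, D.IsExpOf x t m.1) ∧
    -- (c) `Lie(U_x) = F·x`:
    (D.LieOf {m : ↥D.M | ∃ t, D.IsExpOf x t m.1} =
      {y | ∃ c : F, y = fun i => c • (D.ρ i x : Module.End F (D.V i))}) ∧
    -- `x` is an integrable locally finite element of `g`: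
    D.IsIntLocFin x := by
  open TannakaSetting in
  obtain ⟨i₀, v₀, ξ₀, hξ₀, hcoord⟩ := exists_matCoef_expFam_eq_add hnilp HG hx
  open TannakaSetting in
  exact ⟨fun t => ⟨_, isExpOf_expFam hnilp (expFam_mem_M hnilp hdu t)⟩,
    fun m hm => (hm.eq_expFam hnilp).trans (expFam_zero hnilp),
    fun t t' m m' m'' hm hm' hm'' => by
      rw [hm.eq_expFam hnilp, hm'.eq_expFam hnilp, hm''.eq_expFam hnilp]
      exact expFam_add hnilp t t',
    fun t t' m hm hm' =>
      (hm.coord_eq hcoord (m := ⟨m, hm.1⟩)).symm.trans (hm'.coord_eq hcoord (m := ⟨m, hm.1⟩)),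
    fun f hf => exists_eval_eq_of_mem_coordRing hnilp hf,
    exists_mem_coordRing_eq_eval HG hξ₀ hcoord,
    exists_isExpOf_of_forall_mem_coordRing HG hξ₀ hcoord,
    Set.Subset.antisymm (fun y hy => exists_eq_smul_rho_of_mem_lieOf HG hξ₀ hcoord hy)
      (by rintro _ ⟨c, rfl⟩; exact smul_rho_mem_lieOf HG hnilp hdu c),
    isIntLocFin hnilp hdu⟩
end
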